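/- arXiv:1705.08282 — 10 statements merged into one kernel-verified Lean document; each statement's English description precedes it below -/
import Mathlib

section
/- Let K_n be the complete graph on n vertices, let k ≥ 1, let S be a subset of its vertices with partial coloring c : S → [k], and let C = V ∖ S be the set of uncolored vertices. Let p = max_{i ∈ [k]} |c^{-1}(i)| be the largest number of vertices of S sharing one color (p = 0 if S is empty), and let h_S be the number of edges with both endpoints in S whose endpoints receive the same color under c. Then the maximum, over all extensions c' of c to full colorings of K_n, of the number of happy edges equals h_S + p·|C| + |C|(|C|−1)/2, and this maximum is attained by an extension giving all vertices of C one common color of maximum multiplicity in c. -/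
/-!
Split the vertices by their final colour: if colour `i` has `aᵢ` vertices in `S` and `bᵢ` in
`C = V ∖ S`, the happy edges of `K_n` number `∑ᵢ (aᵢ + bᵢ).choose 2`
`= h_S + ∑ᵢ aᵢ bᵢ + ∑ᵢ bᵢ.choose 2`. Since `∑ᵢ bᵢ = |C|`, we have `∑ᵢ aᵢ bᵢ ≤ p |C|` and, by
superadditivity of `choose 2`, `∑ᵢ bᵢ.choose 2 ≤ |C|.choose 2`; both bounds are attained when all
of `C` receives one colour of multiplicity `p`.
-/

open Finset
open scoped Classical

/-- The number of happy edges of a graph `G` under a full coloring `c`: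
an edge is happy when all (i.e., both) of its endpoints receive the same color. -/
noncomputable def happyEdgeCount {V : Type*} [Fintype V] {k : ℕ}
    (G : SimpleGraph V) (c : V → Fin k) : ℕ :=
  (G.edgeFinset.filter (fun e => ∀ x ∈ e, ∀ y ∈ e, c x = c y)).card

theorem Nat.add_choose_two (a b : ℕ) : (a + b).choose 2 = a.choose 2 + a * b + b.choose 2 := by
  induction b with
  | zero => simp
  | succ b ih =>
    rw [← add_assoc, Nat.choose_succ_succ', Nat.choose_succ_succ', ih, Nat.choose_one_right,
      Nat.choose_one_right]
    ring

theorem Finset.sum_choose_two_le_choose_two_sum {ι : Type*} (s : Finset ι) (f : ι → ℕ) :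
    ∑ i ∈ s, (f i).choose 2 ≤ (∑ i ∈ s, f i).choose 2 := by
  induction s using Finset.induction with
  | empty => simp
  | insert i s hi ih =>
    rw [sum_insert hi, sum_insert hi, Nat.add_choose_two]
    omega

namespace SimpleGraph

variable {V : Type*} [Fintype V] [DecidableEq V]

theorem card_top_edgeFinset_filter_subset (u : Finset V) :
    #((⊤ : SimpleGraph V).edgeFinset.filter (fun e => ∀ x ∈ e, x ∈ u)) = (#u).choose 2 := by
  rw [← Sym2.card_image_offDiag]
  congr 1
  ext e
  induction e using Sym2.ind with
  | h x y =>
    simp only [mem_filter, mem_edgeFinset, mem_edgeSet, top_adj, mem_image, mem_offDiag,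
      Sym2.mem_iff, Prod.exists, Function.uncurry_apply_pair, Sym2.eq_iff]
    aesop

theorem card_top_edgeFinset_filter_monochromatic {ι : Type*} [Fintype ι] [DecidableEq ι]
    (t : Finset V) (d : V → ι) :
    #((⊤ : SimpleGraph V).edgeFinset.filter
        (fun e => (∀ x ∈ e, x ∈ t) ∧ ∀ x ∈ e, ∀ y ∈ e, d x = d y))
      = ∑ i, (#(t.filter (d · = i))).choose 2 := by
  have hunion : (⊤ : SimpleGraph V).edgeFinset.filter
        (fun e => (∀ x ∈ e, x ∈ t) ∧ ∀ x ∈ e, ∀ y ∈ e, d x = d y)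
      = univ.biUnion (fun i => (⊤ : SimpleGraph V).edgeFinset.filter
          (fun e => ∀ x ∈ e, x ∈ t.filter (d · = i))) := by
    ext e
    induction e using Sym2.ind with
    | h x y =>
      simp only [mem_filter, mem_biUnion, mem_univ, true_and]
      constructor
      · rintro ⟨he, ht, hd⟩
        exact ⟨d x, he, fun z hz => ⟨ht z hz, hd z hz x (Sym2.mem_mk_left x y)⟩⟩
      · rintro ⟨i, he, h⟩
        exact ⟨he, fun z hz => (h z hz).1, fun z hz w hw => (h z hz).2.trans (h w hw).2.symm⟩
  rw [hunion, card_biUnion]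
  · exact sum_congr rfl fun i _ => card_top_edgeFinset_filter_subset _
  · intro i _ j _ hij
    rw [Function.onFun, Finset.disjoint_left]
    intro e hi hj
    have hx := e.out_fst_mem
    exact hij <| (mem_filter.1 ((mem_filter.1 hi).2 _ hx)).2.symm.trans
      (mem_filter.1 ((mem_filter.1 hj).2 _ hx)).2

end SimpleGraph

open SimpleGraph

theorem Finset.card_filter_eq_add_of_eqOn {V ι : Type*} [Fintype V] [DecidableEq V]
    [DecidableEq ι] (S : Finset V) {c c' : V → ι} (hext : ∀ v ∈ S, c' v = c v) (i : ι) :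
    #(univ.filter (c' · = i)) = #(S.filter (c · = i)) + #(Sᶜ.filter (c' · = i)) := by
  have hS : S.filter (c' · = i) = S.filter (c · = i) :=
    filter_congr fun v hv => by rw [hext v hv]
  rw [← hS, ← card_union_of_disjoint (disjoint_filter_filter disjoint_compl_right),
    ← filter_union, union_compl]

section Extension

variable {V : Type*} [Fintype V] [DecidableEq V] {k : ℕ}

theorem happyEdgeCount_top_eq_sum (c : V → Fin k) :
    happyEdgeCount (⊤ : SimpleGraph V) c = ∑ i, (#(univ.filter (c · = i))).choose 2 := by
  rw [← card_top_edgeFinset_filter_monochromatic, happyEdgeCount]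
  congr 1
  ext e
  simp

variable (S : Finset V) (c : V → Fin k)

theorem happyEdgeCount_top_of_eqOn {c' : V → Fin k} (hext : ∀ v ∈ S, c' v = c v) :
    happyEdgeCount (⊤ : SimpleGraph V) c'
      = #((⊤ : SimpleGraph V).edgeFinset.filter
          (fun e => (∀ x ∈ e, x ∈ S) ∧ ∀ x ∈ e, ∀ y ∈ e, c x = c y))
        + ∑ i, #(S.filter (c · = i)) * #(Sᶜ.filter (c' · = i))
        + ∑ i, (#(Sᶜ.filter (c' · = i))).choose 2 := by
  rw [happyEdgeCount_top_eq_sum, card_top_edgeFinset_filter_monochromatic, ← sum_add_distrib,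
    ← sum_add_distrib]
  exact sum_congr rfl fun i _ => by rw [card_filter_eq_add_of_eqOn S hext, Nat.add_choose_two]

theorem happyEdgeCount_top_le_of_eqOn {c' : V → Fin k} (hext : ∀ v ∈ S, c' v = c v) :
    happyEdgeCount (⊤ : SimpleGraph V) c'
      ≤ #((⊤ : SimpleGraph V).edgeFinset.filter
          (fun e => (∀ x ∈ e, x ∈ S) ∧ ∀ x ∈ e, ∀ y ∈ e, c x = c y))
        + (univ.sup fun i => #(S.filter (c · = i))) * #Sᶜ + (#Sᶜ).choose 2 := by
  have hfibers : ∑ i, #(Sᶜ.filter (c' · = i)) = #Sᶜ :=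
    (card_eq_sum_card_fiberwise fun v _ => mem_univ (c' v)).symm
  have hcross : ∑ i, #(S.filter (c · = i)) * #(Sᶜ.filter (c' · = i))
      ≤ (univ.sup fun i => #(S.filter (c · = i))) * #Sᶜ := by
    rw [← hfibers, mul_sum]
    exact sum_le_sum fun i _ => Nat.mul_le_mul_right _
      (le_sup (f := fun i => #(S.filter (c · = i))) (mem_univ i))
  have hinner := sum_choose_two_le_choose_two_sum univ fun i => #(Sᶜ.filter (c' · = i))
  rw [hfibers] at hinner
  rw [happyEdgeCount_top_of_eqOn S c hext]
  omega

theorem happyEdgeCount_top_extend_const (i : Fin k) :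
    happyEdgeCount (⊤ : SimpleGraph V) (fun v => if v ∈ S then c v else i)
      = #((⊤ : SimpleGraph V).edgeFinset.filter
          (fun e => (∀ x ∈ e, x ∈ S) ∧ ∀ x ∈ e, ∀ y ∈ e, c x = c y))
        + #(S.filter (c · = i)) * #Sᶜ + (#Sᶜ).choose 2 := by
  have hfiber (j : Fin k) :
      Sᶜ.filter (fun v => (if v ∈ S then c v else i) = j) = if i = j then Sᶜ else ∅ := by
    rw [← filter_const]
    exact filter_congr fun v hv => by rw [if_neg (mem_compl.1 hv)]
  rw [happyEdgeCount_top_of_eqOn S c fun v hv => if_pos hv]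
  simp [hfiber, apply_ite card, apply_ite (Nat.choose · 2), mul_ite]

end Extension

/-- For the complete graph `K_n` with a partial coloring `c : S → [k]`,
letting `C = V ∖ S`, `p` the maximum multiplicity of a color of `c` on `S`, and `h_S` the
number of happy edges inside `S`, the maximum number of happy edges over all extensions of `c`
equals `h_S + p·|C| + |C|(|C|−1)/2`, and it is attained by an extension that colors all of `C`
with a single color of maximum multiplicity. -/
theorem stmt1 (n k : ℕ) (hk : 1 ≤ k) (S : Finset (Fin n)) (c : Fin n → Fin k) :
    IsGreatest
      {m : ℕ | ∃ c' : Fin n → Fin k, (∀ v ∈ S, c' v = c v) ∧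
        m = happyEdgeCount (⊤ : SimpleGraph (Fin n)) c'}
      (((⊤ : SimpleGraph (Fin n)).edgeFinset.filter
          (fun e => (∀ x ∈ e, x ∈ S) ∧ ∀ x ∈ e, ∀ y ∈ e, c x = c y)).card
        + (Finset.univ.sup fun i : Fin k => (S.filter fun v => c v = i).card) * Sᶜ.card
        + Sᶜ.card * (Sᶜ.card - 1) / 2) ∧
    ∃ i : Fin k,
      (S.filter fun v => c v = i).card =
        (Finset.univ.sup fun i : Fin k => (S.filter fun v => c v = i).card) ∧
      happyEdgeCount (⊤ : SimpleGraph (Fin n)) (fun v => if v ∈ S then c v else i) =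
        ((⊤ : SimpleGraph (Fin n)).edgeFinset.filter
            (fun e => (∀ x ∈ e, x ∈ S) ∧ ∀ x ∈ e, ∀ y ∈ e, c x = c y)).card
          + (Finset.univ.sup fun i : Fin k => (S.filter fun v => c v = i).card) * Sᶜ.card
          + Sᶜ.card * (Sᶜ.card - 1) / 2 := by
  obtain ⟨i₀, -, hi₀⟩ := exists_mem_eq_sup univ ⟨⟨0, hk⟩, mem_univ _⟩
    fun i : Fin k => #(S.filter (c · = i))
  have hattained := happyEdgeCount_top_extend_const S c i₀
  rw [← hi₀] at hattained
  rw [← Nat.choose_two_right]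
  -- `convert` bridges decidability instances: on `Fin n` the statement's filters elaborate
  -- `∀ x ∈ e, _` with `Nat.decidableForallFin`, the general lemmas with a `Fintype` instance.
  refine ⟨⟨⟨fun v => if v ∈ S then c v else i₀, fun v hv => if_pos hv, by convert hattained.symm⟩,
    ?_⟩, i₀, hi₀.symm, by convert hattained⟩
  rintro m ⟨c', hext, rfl⟩
  convert happyEdgeCount_top_le_of_eqOn S c hext
end

section
/- Let G = (V,E) be a finite simple graph, let k ≥ 1, let S ⊆ V carry a partial coloring c : S → [k], and let C = V ∖ S. Suppose every vertex of S is adjacent in G to every vertex of C. Let p = max_{i ∈ [k]} |c^{-1}(i)| (p = 0 if S is empty), let h_S be the number of edges with both endpoints in S whose endpoints receive the same color under c, and let e_C be the number of edges of G with both endpoints in C. Then the maximum, over all extensions c' of c to full colorings of G, of the number of happy edges equals h_S + p·|C| + e_C. -/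
/-!
Split the edges by how many endpoints lie in `S`. Edges inside `S` are happy or not
independently of the extension, and an edge inside `C = Sᶜ` is at best happy. Since every
vertex of `C` is joined to all of `S`, a vertex `v ∈ C` of color `i` makes exactly
`|c⁻¹(i)|` ≤ `p` crossing edges happy. Coloring all of `C` with a most frequent color of `c`
attains all three bounds at once.
-/

open Finset
open scoped Classical

theorem Finset.card_filter_eq_add_add {ι : Type*} (s : Finset ι) (p q r : ι → Prop)
    [DecidablePred p] [DecidablePred q] [DecidablePred r]
    (hpq : ∀ a ∈ s, p a → ¬ q a) :
    #(s.filter r) = #(s.filter fun a => p a ∧ r a) + #(s.filter fun a => ¬ p a ∧ ¬ q a ∧ r a)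
      + #(s.filter fun a => q a ∧ r a) := by
  simp only [card_filter, ← sum_add_distrib]
  refine sum_congr rfl fun a ha => ?_
  have := hpq a ha
  by_cases p a <;> by_cases q a <;> by_cases r a <;> simp_all

section HappyEdges

variable {V α : Type*} [Fintype V] [DecidableEq α] (G : SimpleGraph V) (S : Finset V)

theorem card_crossing_happy_edges (c : V → α) (hadj : ∀ s ∈ S, ∀ v, v ∉ S → G.Adj s v) :
    #(G.edgeFinset.filter fun e =>
        ¬ (∀ x ∈ e, x ∈ S) ∧ ¬ (∀ x ∈ e, x ∉ S) ∧ ∀ x ∈ e, ∀ y ∈ e, c x = c y)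
      = ∑ v ∈ Sᶜ, #(S.filter fun s => c s = c v) := by
  have hpairs : ∑ v ∈ Sᶜ, #(S.filter fun s => c s = c v)
      = #((Sᶜ ×ˢ S).filter fun p => c p.2 = c p.1) := by
    rw [card_filter, sum_product]
    exact sum_congr rfl fun v _ => card_filter _ _
  rw [hpairs, ← card_image_of_injOn (f := fun p : V × V => s(p.1, p.2))]
  · congr 1
    ext e
    induction e using Sym2.ind with
    | _ x y =>
      simp only [mem_image, mem_filter, mem_product, mem_compl, SimpleGraph.mem_edgeFinset,
        SimpleGraph.mem_edgeSet, Sym2.mem_iff, forall_eq_or_imp, forall_eq, Prod.exists,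
        Sym2.eq_iff, true_and, and_true]
      constructor
      · rintro ⟨hxy, hS, hC, hc, -⟩
        by_cases hx : x ∈ S
        · exact ⟨y, x, ⟨⟨fun hy => hS ⟨hx, hy⟩, hx⟩, hc⟩, .inr ⟨rfl, rfl⟩⟩
        · exact ⟨x, y, ⟨⟨hx, not_not.mp fun hy => hC ⟨hx, hy⟩⟩, hc.symm⟩, .inl ⟨rfl, rfl⟩⟩
      · rintro ⟨a, b, ⟨⟨ha, hb⟩, hab⟩, ⟨rfl, rfl⟩ | ⟨rfl, rfl⟩⟩
        · exact ⟨(hadj b hb a ha).symm, (ha ·.1), (·.2 hb), hab.symm, hab⟩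
        · exact ⟨hadj b hb a ha, (ha ·.2), (·.1 hb), hab, hab.symm⟩
  · rintro ⟨a, b⟩ hab ⟨a', b'⟩ hab' h
    simp only [coe_filter, mem_product, mem_compl, Set.mem_ofPred_eq] at hab hab'
    rcases Sym2.eq_iff.mp h with ⟨rfl, rfl⟩ | ⟨rfl, rfl⟩
    · rfl
    · exact absurd hab.1.2 hab'.1.1

theorem happyEdgeCount_eq_of_extension {k : ℕ} {c c' : V → Fin k}
    (hadj : ∀ s ∈ S, ∀ v, v ∉ S → G.Adj s v) (hc' : ∀ v ∈ S, c' v = c v) :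
    happyEdgeCount G c'
      = #(G.edgeFinset.filter fun e => (∀ x ∈ e, x ∈ S) ∧ ∀ x ∈ e, ∀ y ∈ e, c x = c y)
        + ∑ v ∈ Sᶜ, #(S.filter fun s => c s = c' v)
        + #(G.edgeFinset.filter fun e => (∀ x ∈ e, x ∉ S) ∧ ∀ x ∈ e, ∀ y ∈ e, c' x = c' y) := by
  have hdisj : ∀ e ∈ G.edgeFinset, (∀ x ∈ e, x ∈ S) → ¬ ∀ x ∈ e, x ∉ S := by
    intro e _ hS hC
    induction e using Sym2.ind with
    | _ x y => exact hC x (Sym2.mem_mk_left x y) (hS x (Sym2.mem_mk_left x y))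
  have hinside : (G.edgeFinset.filter fun e => (∀ x ∈ e, x ∈ S) ∧ ∀ x ∈ e, ∀ y ∈ e, c' x = c' y)
      = G.edgeFinset.filter fun e => (∀ x ∈ e, x ∈ S) ∧ ∀ x ∈ e, ∀ y ∈ e, c x = c y :=
    filter_congr fun e _ => and_congr_right fun hS => forall₂_congr fun x hx =>
      forall₂_congr fun y hy => by rw [hc' x (hS x hx), hc' y (hS y hy)]
  have hcrossing : ∀ v ∈ Sᶜ, #(S.filter fun s => c' s = c' v) = #(S.filter fun s => c s = c' v) :=
    fun v _ => congrArg card <| filter_congr fun s hs => by rw [hc' s hs]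
  rw [happyEdgeCount, card_filter_eq_add_add _ _ _ _ hdisj, card_crossing_happy_edges G S c' hadj,
    hinside, sum_congr rfl hcrossing]

theorem happyEdgeCount_le_of_extension {k : ℕ} {c c' : V → Fin k}
    (hadj : ∀ s ∈ S, ∀ v, v ∉ S → G.Adj s v) (hc' : ∀ v ∈ S, c' v = c v) :
    happyEdgeCount G c'
      ≤ #(G.edgeFinset.filter fun e => (∀ x ∈ e, x ∈ S) ∧ ∀ x ∈ e, ∀ y ∈ e, c x = c y)
        + (univ.sup fun i => #(S.filter fun v => c v = i)) * #Sᶜ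
        + #(G.edgeFinset.filter fun e => ∀ x ∈ e, x ∉ S) := by
  rw [happyEdgeCount_eq_of_extension G S hadj hc']
  have hcrossing : ∑ v ∈ Sᶜ, #(S.filter fun s => c s = c' v)
      ≤ (univ.sup fun i => #(S.filter fun v => c v = i)) * #Sᶜ := by
    rw [mul_comm, ← smul_eq_mul]
    exact sum_le_card_nsmul _ _ _ fun v _ =>
      le_sup (f := fun i => #(S.filter fun s => c s = i)) (mem_univ (c' v))
  have hinside : #(G.edgeFinset.filter fun e => (∀ x ∈ e, x ∉ S) ∧ ∀ x ∈ e, ∀ y ∈ e, c' x = c' y)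
      ≤ #(G.edgeFinset.filter fun e => ∀ x ∈ e, x ∉ S) :=
    card_le_card (monotone_filter_right _ fun _ _ => And.left)
  omega

theorem happyEdgeCount_piecewise_const {k : ℕ} (c : V → Fin k) (i : Fin k)
    (hadj : ∀ s ∈ S, ∀ v, v ∉ S → G.Adj s v) :
    happyEdgeCount G (S.piecewise c fun _ => i)
      = #(G.edgeFinset.filter fun e => (∀ x ∈ e, x ∈ S) ∧ ∀ x ∈ e, ∀ y ∈ e, c x = c y)
        + #(S.filter fun v => c v = i) * #Sᶜ
        + #(G.edgeFinset.filter fun e => ∀ x ∈ e, x ∉ S) := by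
  rw [happyEdgeCount_eq_of_extension G S (c' := S.piecewise c fun _ => i) hadj
    fun v hv => piecewise_eq_of_mem _ _ _ hv]
  have hcrossing : ∀ v ∈ Sᶜ, S.piecewise c (fun _ => i) v = i :=
    fun v hv => piecewise_eq_of_notMem _ _ _ (mem_compl.mp hv)
  have hinside : ∀ e ∈ G.edgeFinset, (∀ x ∈ e, x ∉ S) →
      ∀ x ∈ e, ∀ y ∈ e, S.piecewise c (fun _ => i) x = S.piecewise c (fun _ => i) y :=
    fun e _ hC x hx y hy => by
      rw [piecewise_eq_of_notMem _ _ _ (hC x hx), piecewise_eq_of_notMem _ _ _ (hC y hy)]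
  rw [sum_congr rfl fun v hv => by rw [hcrossing v hv], sum_const, smul_eq_mul, mul_comm,
    filter_congr fun e he => and_iff_left_of_imp (hinside e he)]

end HappyEdges

/-- Let `G` be a finite simple graph with a partial coloring `c : S → [k]`,
`C = V ∖ S`, and suppose every vertex of `S` is adjacent to every vertex of `C`.  With `p` the
maximum color multiplicity of `c` on `S`, `h_S` the number of happy edges inside `S`, and `e_C`
the number of edges inside `C`, the maximum number of happy edges over all extensions of `c`
equals `h_S + p·|C| + e_C`. -/
theorem stmt2 {V : Type*} [Fintype V] (k : ℕ) (hk : 1 ≤ k)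
    (G : SimpleGraph V) (S : Finset V) (c : V → Fin k)
    (hadj : ∀ s ∈ S, ∀ v, v ∉ S → G.Adj s v) :
    IsGreatest
      {m : ℕ | ∃ c' : V → Fin k, (∀ v ∈ S, c' v = c v) ∧ m = happyEdgeCount G c'}
      ((G.edgeFinset.filter
          (fun e => (∀ x ∈ e, x ∈ S) ∧ ∀ x ∈ e, ∀ y ∈ e, c x = c y)).card
        + (Finset.univ.sup fun i : Fin k => (S.filter fun v => c v = i).card) * Sᶜ.card
        + (G.edgeFinset.filter (fun e => ∀ x ∈ e, x ∉ S)).card) := by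
  have : Nonempty (Fin k) := ⟨⟨0, hk⟩⟩
  obtain ⟨i, -, hi⟩ := exists_mem_eq_sup univ univ_nonempty fun i => #(S.filter fun v => c v = i)
  refine ⟨⟨S.piecewise c fun _ => i, fun v hv => piecewise_eq_of_mem _ _ _ hv, ?_⟩, ?_⟩
  · rw [happyEdgeCount_piecewise_const G S c i hadj, hi]
  · rintro m ⟨c', hc', rfl⟩
    exact happyEdgeCount_le_of_extension G S hadj hc'
end

section
/- Let k ≥ 1, let G = (V,E) be a finite simple graph, and let c : S → [k] be a partial coloring of G such that there exist two vertices u, v ∈ S with c(u) ≠ c(v). Define the graph G' on the vertex set V ⊔ E in which: any two distinct vertices of the V-part are adjacent (the V-part is a clique), each vertex e of the E-part is adjacent exactly to the two endpoints of e in the V-part, and no two vertices of the E-part are adjacent. Let c' be the partial coloring of G' that assigns c(x) to the copy of each x ∈ S and leaves all other vertices uncolored. Then for every natural number ℓ: there exists an extension of c to a full k-coloring of G making at least ℓ edges of G happy if and only if there exists an extension of c' to a full k-coloring of G' making at least ℓ vertices of G' happy. -/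
open Finset
open scoped Classical

/-- The number of happy vertices of a graph `G` under a full coloring `c`:
a vertex is happy when it and all of its neighbors share one color. -/
noncomputable def happyVertexCount {V : Type*} [Fintype V] {k : ℕ}
    (G : SimpleGraph V) (c : V → Fin k) : ℕ :=
  (Finset.univ.filter (fun v => ∀ u, G.Adj v u → c u = c v)).card

/-- The split graph `G'` on `V ⊔ E`: the `V`-part forms a clique, each edge-vertex is adjacent
exactly to its two endpoints in the `V`-part, and the `E`-part is an independent set. -/
def splitGraphOf {V : Type*} (G : SimpleGraph V) : SimpleGraph (V ⊕ ↥G.edgeSet) :=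
  SimpleGraph.fromRel (fun x y =>
    match x, y with
    | Sum.inl _, Sum.inl _ => True
    | Sum.inl u, Sum.inr e => u ∈ (e : Sym2 V)
    | _, _ => False)

/-!
A happy vertex of the clique part forces the whole clique to be monochromatic, so once the
partial coloring uses two colors only edge-vertices can be happy, and an edge-vertex is happy
exactly when both endpoints of its edge carry its color. Hence happy vertices of `G'` inject
into happy edges of `G`; conversely, coloring each edge-vertex like one of its endpoints makes
every happy edge of `G` a happy vertex of `G'`.
-/

section SplitGraph

variable {V : Type*} {G : SimpleGraph V}

@[simp]
lemma splitGraphOf_adj_inl_inl {x y : V} :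
    (splitGraphOf G).Adj (.inl x) (.inl y) ↔ x ≠ y := by
  simp [splitGraphOf]

@[simp]
lemma splitGraphOf_adj_inr_inl {e : G.edgeSet} {x : V} :
    (splitGraphOf G).Adj (.inr e) (.inl x) ↔ x ∈ (e : Sym2 V) := by
  simp [splitGraphOf]

@[simp]
lemma splitGraphOf_not_adj_inr_inr {e e' : G.edgeSet} :
    ¬ (splitGraphOf G).Adj (.inr e) (.inr e') := by
  simp [splitGraphOf]

lemma eq_of_forall_splitGraphOf_adj_inl {α : Type*} {c : V ⊕ G.edgeSet → α} {x : V}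
    (hx : ∀ a, (splitGraphOf G).Adj (.inl x) a → c a = c (.inl x)) (y : V) :
    c (.inl y) = c (.inl x) := by
  by_cases hyx : y = x
  · rw [hyx]
  · exact hx _ (splitGraphOf_adj_inl_inl.mpr (Ne.symm hyx))

lemma not_forall_splitGraphOf_adj_inl {α : Type*} {c : V ⊕ G.edgeSet → α} {u v : V}
    (huv : c (.inl u) ≠ c (.inl v)) (x : V) :
    ¬ ∀ a, (splitGraphOf G).Adj (.inl x) a → c a = c (.inl x) := fun hx =>
  huv ((eq_of_forall_splitGraphOf_adj_inl hx u).trans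
    (eq_of_forall_splitGraphOf_adj_inl hx v).symm)

variable [Fintype V] {k : ℕ}

theorem happyVertexCount_splitGraphOf_le (c : V ⊕ G.edgeSet → Fin k) {u v : V}
    (huv : c (.inl u) ≠ c (.inl v)) :
    happyVertexCount (splitGraphOf G) c ≤ happyEdgeCount G (c ∘ Sum.inl) := by
  refine card_le_card_of_injOn (Sum.elim (fun x => s(x, x)) Subtype.val) ?_ ?_
  · rintro (x | e) hhappy <;>
      simp only [coe_filter, mem_univ, true_and, Set.mem_ofPred_eq] at hhappy
    · exact absurd hhappy (not_forall_splitGraphOf_adj_inl huv x)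
    · have hend : ∀ x ∈ (e : Sym2 V), c (.inl x) = c (.inr e) := fun x hx =>
        hhappy _ (splitGraphOf_adj_inr_inl.mpr hx)
      simp only [coe_filter, SimpleGraph.mem_edgeFinset, Set.mem_ofPred_eq, Sum.elim_inr,
        Function.comp_apply]
      exact ⟨e.2, fun x hx y hy => (hend x hx).trans (hend y hy).symm⟩
  · rintro (x | e) hx (y | e') hy h <;>
      simp only [coe_filter, mem_univ, true_and, Set.mem_ofPred_eq] at hx hy
    · exact absurd hx (not_forall_splitGraphOf_adj_inl huv x)
    · exact absurd hx (not_forall_splitGraphOf_adj_inl huv x)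
    · exact absurd hy (not_forall_splitGraphOf_adj_inl huv y)
    · exact congrArg Sum.inr (Subtype.ext h)

theorem happyEdgeCount_le_happyVertexCount_splitGraphOf (c : V → Fin k) :
    happyEdgeCount G c ≤
      happyVertexCount (splitGraphOf G) (Sum.elim c fun e => c (e : Sym2 V).out.1) := by
  refine card_le_card_of_surjOn (Sum.elim (fun x => s(x, x)) Subtype.val) ?_
  intro e he
  simp only [coe_filter, SimpleGraph.mem_edgeFinset, Set.mem_ofPred_eq] at he
  obtain ⟨heG, hhappy⟩ := he
  refine ⟨.inr ⟨e, heG⟩, ?_, rfl⟩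
  simp only [coe_filter, mem_univ, true_and, Set.mem_ofPred_eq]
  rintro (x | e') hadj
  · exact hhappy x (splitGraphOf_adj_inr_inl.mp hadj) _ (Sym2.out_fst_mem e)
  · exact absurd hadj splitGraphOf_not_adj_inr_inr

end SplitGraph

theorem stmt3_general {V : Type*} [Fintype V] (k : ℕ)
    (G : SimpleGraph V) (S : Finset V) (c : V → Fin k)
    (u v : V) (hu : u ∈ S) (hv : v ∈ S) (hcuv : c u ≠ c v) (ℓ : ℕ) :
    (∃ c₁ : V → Fin k, (∀ x ∈ S, c₁ x = c x) ∧ ℓ ≤ happyEdgeCount G c₁) ↔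
    (∃ c₂ : V ⊕ ↥G.edgeSet → Fin k, (∀ x ∈ S, c₂ (Sum.inl x) = c x) ∧
      ℓ ≤ happyVertexCount (splitGraphOf G) c₂) := by
  constructor
  · rintro ⟨c₁, hc₁, hℓ⟩
    exact ⟨_, hc₁, hℓ.trans (happyEdgeCount_le_happyVertexCount_splitGraphOf c₁)⟩
  · rintro ⟨c₂, hc₂, hℓ⟩
    have huv : c₂ (.inl u) ≠ c₂ (.inl v) := by rwa [hc₂ u hu, hc₂ v hv]
    exact ⟨c₂ ∘ Sum.inl, hc₂, hℓ.trans (happyVertexCount_splitGraphOf_le c₂ huv)⟩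

/-- If a partial coloring `c : S → [k]` of a graph `G` uses at least two
distinct colors, then for every `ℓ`, `c` extends to a full coloring of `G` with at least `ℓ`
happy edges iff the induced partial coloring of the split graph `G'` extends to a full coloring
of `G'` with at least `ℓ` happy vertices. -/
theorem stmt3 {V : Type*} [Fintype V] (k : ℕ) (hk : 1 ≤ k)
    (G : SimpleGraph V) (S : Finset V) (c : V → Fin k)
    (u v : V) (hu : u ∈ S) (hv : v ∈ S) (hcuv : c u ≠ c v) (ℓ : ℕ) :
    (∃ c₁ : V → Fin k, (∀ x ∈ S, c₁ x = c x) ∧ ℓ ≤ happyEdgeCount G c₁) ↔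
    (∃ c₂ : V ⊕ ↥G.edgeSet → Fin k, (∀ x ∈ S, c₂ (Sum.inl x) = c x) ∧
      ℓ ≤ happyVertexCount (splitGraphOf G) c₂) :=
  stmt3_general k G S c u v hu hv hcuv ℓ
end

section
/- Let k ≥ 3, let G = (V,E) be a finite simple graph, and let c : S → [k] be a partial coloring of G. Define the graph G' on the vertex set V ⊔ E ⊔ (V × {1,2,3}) in which: each vertex e of the E-part is adjacent exactly to the two endpoints of e in the V-part; each x ∈ V is additionally adjacent to (x,1) and (x,3); and (x,1)-(x,2)-(x,3) is a path for each x ∈ V; there are no other edges. Let c' be the partial coloring of G' that assigns c(x) to the copy of each x ∈ S, assigns colors 1, 2, 3 to (x,1), (x,2), (x,3) respectively for every x ∈ V, and leaves the remaining vertices uncolored. Then G' is bipartite, and for every natural number ℓ: there exists an extension of c to a full k-coloring of G making at least ℓ edges of G happy if and only if there exists an extension of c' to a full k-coloring of G' making at least ℓ vertices of G' happy. -/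
open Finset
open scoped Classical

/-- The graph `G'` on `V ⊔ E ⊔ (V × {1,2,3})` (here `V × Fin 3`, with `0,1,2` playing the roles
of `1,2,3`): each edge-vertex is adjacent exactly to its two endpoints in the `V`-part; each
`x ∈ V` is additionally adjacent to `(x,1)` and `(x,3)`; and `(x,1)-(x,2)-(x,3)` is a path for
each `x ∈ V`; there are no other edges. -/
def bipGraphOf {V : Type*} (G : SimpleGraph V) :
    SimpleGraph (V ⊕ (↥G.edgeSet ⊕ V × Fin 3)) :=
  SimpleGraph.fromRel (fun a b =>
    match a, b with
    | Sum.inl u, Sum.inr (Sum.inl e) => u ∈ (e : Sym2 V)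
    | Sum.inl u, Sum.inr (Sum.inr (x, j)) => u = x ∧ (j = 0 ∨ j = 2)
    | Sum.inr (Sum.inr (x, j)), Sum.inr (Sum.inr (y, j')) =>
        x = y ∧ ((j = 0 ∧ j' = 1) ∨ (j = 1 ∧ j' = 2))
    | _, _ => False)

/-! With the path vertices precoloured `1, 2, 3`, no vertex of `V` is happy in `G'` (it sees the
colours `1` and `3`) and no path vertex is (it has a path neighbour of another colour). So the
happy vertices of `G'` are the edge-vertices coloured like both of their endpoints, and each of
them is a happy edge of `G`; conversely, colouring every edge-vertex like one of its endpoints turns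
each happy edge of `G` into a happy vertex of `G'`. One side of the bipartition of `G'` consists of
`V` and the middle path vertices. -/

section
variable {V : Type*} {G : SimpleGraph V}

lemma bipGraphOf_adj_edge_iff {e : G.edgeSet} {a : V ⊕ (↥G.edgeSet ⊕ V × Fin 3)} :
    (bipGraphOf G).Adj (Sum.inr (Sum.inl e)) a ↔ ∃ x ∈ (e : Sym2 V), a = Sum.inl x := by
  rcases a with x | f | p <;> simp [bipGraphOf]

lemma bipGraphOf_adj_inl_path (x : V) {j : Fin 3} (hj : j = 0 ∨ j = 2) :
    (bipGraphOf G).Adj (Sum.inl x) (Sum.inr (Sum.inr (x, j))) := by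
  simpa [bipGraphOf] using hj

lemma bipGraphOf_adj_path_path (x : V) {j j' : Fin 3}
    (h : j.val + 1 = j'.val ∨ j'.val + 1 = j.val) :
    (bipGraphOf G).Adj (Sum.inr (Sum.inr (x, j))) (Sum.inr (Sum.inr (x, j'))) := by
  simp only [bipGraphOf, SimpleGraph.fromRel_adj, ne_eq, Sum.inr.injEq, Prod.mk.injEq, true_and]
  omega

variable (G) in
def bipGraphOfPart : Set (V ⊕ (↥G.edgeSet ⊕ V × Fin 3)) :=
  {a | match a with
    | Sum.inl _ => True
    | Sum.inr (Sum.inl _) => False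
    | Sum.inr (Sum.inr (_, j)) => j = 1}

lemma bipGraphOf_adj_mem_part_iff {a b : V ⊕ (↥G.edgeSet ⊕ V × Fin 3)}
    (h : (bipGraphOf G).Adj a b) : a ∈ bipGraphOfPart G ↔ b ∉ bipGraphOfPart G := by
  rcases a with x | e | ⟨x, j⟩ <;> rcases b with y | f | ⟨y, j'⟩ <;>
    simp [bipGraphOf, bipGraphOfPart] at h ⊢ <;> omega

lemma exists_eq_edge_of_happy {k : ℕ} (hk : 3 ≤ k) {c : V ⊕ (↥G.edgeSet ⊕ V × Fin 3) → Fin k}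
    (hc : ∀ x j, c (Sum.inr (Sum.inr (x, j))) = Fin.castLE hk j)
    {v : V ⊕ (↥G.edgeSet ⊕ V × Fin 3)} (hv : ∀ u, (bipGraphOf G).Adj v u → c u = c v) :
    ∃ e : G.edgeSet, v = Sum.inr (Sum.inl e) := by
  have hne : ∀ {j j' : Fin 3}, j ≠ j' → Fin.castLE hk j ≠ Fin.castLE hk j' :=
    (Fin.castLE_injective hk).ne
  rcases v with x | e | ⟨x, j⟩
  · have h0 := hv _ (bipGraphOf_adj_inl_path x (j := 0) (by simp))
    have h2 := hv _ (bipGraphOf_adj_inl_path x (j := 2) (by simp))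
    rw [hc] at h0 h2
    exact absurd (h0.trans h2.symm) (hne (by decide))
  · exact ⟨e, rfl⟩
  · obtain ⟨j', hadj, hjj'⟩ : ∃ j', (j.val + 1 = j'.val ∨ j'.val + 1 = j.val) ∧ j' ≠ j := by
      fin_cases j
      exacts [⟨1, by decide⟩, ⟨0, by decide⟩, ⟨1, by decide⟩]
    have h := hv _ (bipGraphOf_adj_path_path x hadj)
    rw [hc, hc] at h
    exact absurd h (hne hjj')

end

section
variable {V : Type*} [Fintype V] {G : SimpleGraph V} {k : ℕ}

lemma happyEdgeCount_eq_card_edgeSet (c : V → Fin k) :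
    happyEdgeCount G c =
      #{e : G.edgeSet | ∀ x ∈ (e : Sym2 V), ∀ y ∈ (e : Sym2 V), c x = c y} := by
  rw [happyEdgeCount, ← Finset.card_map (Function.Embedding.subtype (· ∈ G.edgeSet))]
  congr 1
  ext e
  simp [and_comm]

lemma happyVertexCount_bipGraphOf (hk : 3 ≤ k) {c : V ⊕ (↥G.edgeSet ⊕ V × Fin 3) → Fin k}
    (hc : ∀ x j, c (Sum.inr (Sum.inr (x, j))) = Fin.castLE hk j) :
    happyVertexCount (bipGraphOf G) c =
      #{e : G.edgeSet | ∀ x ∈ (e : Sym2 V), c (Sum.inl x) = c (Sum.inr (Sum.inl e))} := by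
  rw [happyVertexCount, ← Finset.card_map
    ((Function.Embedding.inl (α := G.edgeSet) (β := V × Fin 3)).trans
      (Function.Embedding.inr (α := V)))]
  congr 1
  ext v
  simp only [mem_filter, mem_univ, true_and, mem_map, Function.Embedding.trans_apply,
    Function.Embedding.inl_apply, Function.Embedding.inr_apply]
  constructor
  · intro hv
    obtain ⟨e, rfl⟩ := exists_eq_edge_of_happy hk hc hv
    exact ⟨e, fun x hx => hv _ (bipGraphOf_adj_edge_iff.2 ⟨x, hx, rfl⟩), rfl⟩
  · rintro ⟨e, he, rfl⟩ u hu
    obtain ⟨x, hx, rfl⟩ := bipGraphOf_adj_edge_iff.1 hu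
    exact he x hx

lemma happyVertexCount_bipGraphOf_le (hk : 3 ≤ k) {c : V ⊕ (↥G.edgeSet ⊕ V × Fin 3) → Fin k}
    (hc : ∀ x j, c (Sum.inr (Sum.inr (x, j))) = Fin.castLE hk j) :
    happyVertexCount (bipGraphOf G) c ≤ happyEdgeCount G (fun x => c (Sum.inl x)) := by
  rw [happyVertexCount_bipGraphOf hk hc, happyEdgeCount_eq_card_edgeSet]
  exact card_le_card <| monotone_filter_right _ fun e _ he x hx y hy =>
    (he x hx).trans (he y hy).symm

variable (G) in
noncomputable def bipGraphOfColoring (hk : 3 ≤ k) (c : V → Fin k) :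
    V ⊕ (↥G.edgeSet ⊕ V × Fin 3) → Fin k :=
  Sum.elim c (Sum.elim (fun e => c (Quot.out (e : Sym2 V)).1) (fun p => Fin.castLE hk p.2))

lemma happyEdgeCount_le_happyVertexCount_bipGraphOfColoring (hk : 3 ≤ k) (c : V → Fin k) :
    happyEdgeCount G c ≤ happyVertexCount (bipGraphOf G) (bipGraphOfColoring G hk c) := by
  rw [happyVertexCount_bipGraphOf hk (fun _ _ => rfl), happyEdgeCount_eq_card_edgeSet]
  exact card_le_card <| monotone_filter_right _ fun e _ he x hx =>
    he x hx _ (Sym2.out_fst_mem (e : Sym2 V))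

end

/-- For `k ≥ 3` and a partial coloring `c : S → [k]` of `G`, the graph `G'`
with the cherry gadgets (its path vertices `(x,1),(x,2),(x,3)` precolored with the three colors
`1,2,3`) is bipartite, and for every `ℓ`: `c` extends to a full coloring of `G` with at least
`ℓ` happy edges iff the partial coloring `c'` of `G'` extends to a full coloring of `G'` with at
least `ℓ` happy vertices. -/
theorem stmt4 {V : Type*} [Fintype V] (k : ℕ) (hk : 3 ≤ k)
    (G : SimpleGraph V) (S : Finset V) (c : V → Fin k) :
    (∃ A : Set (V ⊕ (↥G.edgeSet ⊕ V × Fin 3)),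
      ∀ a b, (bipGraphOf G).Adj a b → ((a ∈ A ∧ b ∉ A) ∨ (a ∉ A ∧ b ∈ A))) ∧
    ∀ ℓ : ℕ,
      ((∃ c₁ : V → Fin k, (∀ x ∈ S, c₁ x = c x) ∧ ℓ ≤ happyEdgeCount G c₁) ↔
      (∃ c₂ : V ⊕ (↥G.edgeSet ⊕ V × Fin 3) → Fin k,
        (∀ x ∈ S, c₂ (Sum.inl x) = c x) ∧
        (∀ x : V, ∀ j : Fin 3, c₂ (Sum.inr (Sum.inr (x, j))) = Fin.castLE hk j) ∧
        ℓ ≤ happyVertexCount (bipGraphOf G) c₂)) := by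
  refine ⟨⟨bipGraphOfPart G, fun a b hab => ?_⟩, fun ℓ => ⟨?_, ?_⟩⟩
  · have := bipGraphOf_adj_mem_part_iff hab
    tauto
  · rintro ⟨c₁, hS, hℓ⟩
    exact ⟨bipGraphOfColoring G hk c₁, hS, fun _ _ => rfl,
      hℓ.trans (happyEdgeCount_le_happyVertexCount_bipGraphOfColoring hk c₁)⟩
  · rintro ⟨c₂, hS, hc₂, hℓ⟩
    exact ⟨fun x => c₂ (Sum.inl x), hS, hℓ.trans (happyVertexCount_bipGraphOf_le hk hc₂)⟩
end

section
/- Let k ≥ 1, let G = (V,E) be a finite simple graph with n = |V| vertices and m = |E| edges, let c : S → [k] be a partial coloring of G, and let ℓ be a natural number. Set α = n(n−1)/2 − m + 1, and let K be the complete graph on V with edge weights w(uv) = α if uv ∈ E and w(uv) = 1 if uv ∉ E (u ≠ v). Then there exists an extension of c to a full k-coloring of G making at least ℓ edges of G happy if and only if there exists an extension of c to a full k-coloring of K for which the total weight of the happy edges of K is at least α·ℓ. -/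
/-!
Under any coloring, an edge of `G` contributes `α` to the happy weight in `K` and a non-edge
contributes `1`, so the happy weight is `α · (happy edges of G) + (happy non-edges of G)`.
The second term is at most the number `n(n−1)/2 − m` of non-edges, which is less than `α`;
hence the weight is at least `α · ℓ` exactly when at least `ℓ` edges of `G` are happy, for the
same coloring.
-/

open Finset
open scoped Classical

noncomputable def happyEdgeWeight {V : Type*} [Fintype V] {k : ℕ}
    (G : SimpleGraph V) (w : Sym2 V → ℕ) (c : V → Fin k) : ℕ :=
  ∑ e ∈ G.edgeFinset.filter (fun e => ∀ x ∈ e, ∀ y ∈ e, c x = c y), w e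

namespace SimpleGraph

variable {V : Type*} [Fintype V] {k : ℕ}

theorem card_edgeFinset_compl (G : SimpleGraph V) [Fintype G.edgeSet] [Fintype Gᶜ.edgeSet] :
    #Gᶜ.edgeFinset = (Fintype.card V).choose 2 - #G.edgeFinset := by
  have hunion : G.edgeFinset ∪ Gᶜ.edgeFinset = (⊤ : SimpleGraph V).edgeFinset := by
    ext e
    induction e using Sym2.ind
    simp only [mem_union, mem_edgeFinset, mem_edgeSet, compl_adj, top_adj]
    grind [Adj.ne]
  rw [← card_edgeFinset_top_eq_card_choose_two, ← hunion,
    card_union_of_disjoint (disjoint_edgeFinset.mpr disjoint_compl_right), Nat.add_sub_cancel_left]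

theorem happyEdgeCount_le_card_edgeFinset (G : SimpleGraph V) [Fintype G.edgeSet]
    (c : V → Fin k) : happyEdgeCount G c ≤ #G.edgeFinset := by
  rw [happyEdgeCount]
  convert card_filter_le _ _

theorem happyEdgeWeight_top_ite (G : SimpleGraph V) (a b : ℕ) (c : V → Fin k) :
    happyEdgeWeight ⊤ (fun e => if e ∈ G.edgeSet then a else b) c =
      a * happyEdgeCount G c + b * happyEdgeCount Gᶜ c := by
  rw [happyEdgeWeight, sum_ite, sum_const, sum_const, smul_eq_mul, smul_eq_mul,
    happyEdgeCount, happyEdgeCount, mul_comm, mul_comm b, filter_filter, filter_filter]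
  congr 3 <;> ext e <;> induction e using Sym2.ind
  · simp only [mem_filter, mem_edgeFinset, mem_edgeSet, top_adj]
    grind [Adj.ne]
  · simp only [mem_filter, mem_edgeFinset, mem_edgeSet, top_adj, compl_adj]
    grind

end SimpleGraph

theorem Nat.le_iff_mul_le_mul_add {a b r ℓ : ℕ} (hr : r < a) : ℓ ≤ b ↔ a * ℓ ≤ a * b + r :=
  ⟨fun h => (Nat.mul_le_mul_left a h).trans (Nat.le_add_right _ _),
    fun h => Nat.lt_succ_iff.mp (Nat.lt_of_mul_lt_mul_left (a := a) (by rw [mul_add_one]; omega))⟩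

theorem stmt6_general {V : Type*} [Fintype V] (k : ℕ)
    (G : SimpleGraph V) (S : Finset V) (c : V → Fin k) (ℓ : ℕ) :
    (∃ c₁ : V → Fin k, (∀ x ∈ S, c₁ x = c x) ∧ ℓ ≤ happyEdgeCount G c₁) ↔
    (∃ c₂ : V → Fin k, (∀ x ∈ S, c₂ x = c x) ∧
      (Fintype.card V * (Fintype.card V - 1) / 2 - G.edgeFinset.card + 1) * ℓ ≤
        happyEdgeWeight (⊤ : SimpleGraph V)
          (fun e => if e ∈ G.edgeSet
            then Fintype.card V * (Fintype.card V - 1) / 2 - G.edgeFinset.card + 1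
            else 1)
          c₂) := by
  set α := Fintype.card V * (Fintype.card V - 1) / 2 - G.edgeFinset.card + 1
  have hα : #Gᶜ.edgeFinset < α := by
    rw [G.card_edgeFinset_compl, Nat.choose_two_right]; omega
  refine exists_congr fun c' => and_congr_right fun _ => ?_
  rw [G.happyEdgeWeight_top_ite, one_mul]
  exact Nat.le_iff_mul_le_mul_add ((Gᶜ.happyEdgeCount_le_card_edgeFinset c').trans_lt hα)

/-- Let `G` have `n` vertices and `m` edges, with partial coloring
`c : S → [k]`, let `α = n(n−1)/2 − m + 1`, and weight the edges of the complete graph `K` on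
`V` by `α` on edges of `G` and `1` on non-edges.  Then for every `ℓ`: `c` extends to a full
coloring of `G` with at least `ℓ` happy edges iff `c` extends to a full coloring of `K` whose
happy edges have total weight at least `α·ℓ`. -/
theorem stmt6 {V : Type*} [Fintype V] (k : ℕ) (hk : 1 ≤ k)
    (G : SimpleGraph V) (S : Finset V) (c : V → Fin k) (ℓ : ℕ) :
    (∃ c₁ : V → Fin k, (∀ x ∈ S, c₁ x = c x) ∧ ℓ ≤ happyEdgeCount G c₁) ↔
    (∃ c₂ : V → Fin k, (∀ x ∈ S, c₂ x = c x) ∧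
      (Fintype.card V * (Fintype.card V - 1) / 2 - G.edgeFinset.card + 1) * ℓ ≤
        happyEdgeWeight (⊤ : SimpleGraph V)
          (fun e => if e ∈ G.edgeSet
            then Fintype.card V * (Fintype.card V - 1) / 2 - G.edgeFinset.card + 1
            else 1)
          c₂) :=
  stmt6_general k G S c ℓ
end

section
/- For every integer n ≥ 1, the number of subsets of an n-element set of size at most n/3 satisfies ∑_{i=0}^{⌊n/3⌋} C(n, i) < 1.89^n, where C(n, i) denotes the binomial coefficient. -/
open Finset

/-!
Chernoff-type bound: for `0 ≤ x ≤ 1` and `i ≤ k` we have `x^k ≤ x^i`, so the partial sum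
`∑_{i ≤ k} C(n, i)` times `x^k` is at most `(1 + x)^n`. Taking `x = 1/2` and `k = ⌊n/3⌋` gives
`(3/2)^n 2^(n/3)`, whose cube is at most `(27/4)^n`, and `27/4 = 6.75 < 6.751269 = 1.89^3`.
-/

theorem sum_range_choose_mul_pow_le (n k : ℕ) {x : ℝ} (hx₀ : 0 ≤ x) (hx₁ : x ≤ 1) :
    (∑ i ∈ range (k + 1), (n.choose i : ℝ)) * x ^ k ≤ (1 + x) ^ n := by
  calc (∑ i ∈ range (k + 1), (n.choose i : ℝ)) * x ^ k
      = ∑ i ∈ range (k + 1), (n.choose i : ℝ) * x ^ k := sum_mul _ _ _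
    _ ≤ ∑ i ∈ range (k + 1), (n.choose i : ℝ) * x ^ i := by
        refine sum_le_sum fun i hi ↦ mul_le_mul_of_nonneg_left ?_ (by positivity)
        exact pow_le_pow_of_le_one hx₀ hx₁ (Nat.lt_succ_iff.mp (mem_range.mp hi))
    _ ≤ ∑ i ∈ range (n + 1), (n.choose i : ℝ) * x ^ i := by
        by_cases hkn : k ≤ n
        · exact sum_le_sum_of_subset_of_nonneg (range_subset_range.mpr (by omega))
            fun _ _ _ ↦ by positivity
        · refine (sum_subset (range_subset_range.mpr (by omega)) fun i _ hi ↦ ?_).ge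
          rw [Nat.choose_eq_zero_of_lt (by simpa using hi), Nat.cast_zero, zero_mul]
    _ = (1 + x) ^ n := by
        rw [add_comm 1 x, add_pow]
        exact sum_congr rfl fun i _ ↦ by ring

theorem three_halves_pow_mul_two_pow_div_three_lt (n : ℕ) (hn : 1 ≤ n) :
    (3 / 2 : ℝ) ^ n * 2 ^ (n / 3) < 1.89 ^ n := by
  refine lt_of_pow_lt_pow_left₀ 3 (by positivity) ?_
  calc ((3 / 2 : ℝ) ^ n * 2 ^ (n / 3)) ^ 3
      = (27 / 8) ^ n * 2 ^ (3 * (n / 3)) := by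
        rw [mul_pow, ← pow_mul, ← pow_mul, mul_comm n 3, pow_mul, mul_comm (n / 3) 3]
        norm_num
    _ ≤ (27 / 8) ^ n * 2 ^ n := by
        gcongr
        · norm_num
        · omega
    _ = (27 / 4) ^ n := by rw [← mul_pow]; norm_num
    _ < (1.89 ^ 3) ^ n := by gcongr; norm_num
    _ = (1.89 ^ n) ^ 3 := by rw [← pow_mul, ← pow_mul, mul_comm]

/-- For every `n ≥ 1`, the number of subsets of an `n`-element set of size at
most `n/3` satisfies `∑_{i=0}^{⌊n/3⌋} C(n, i) < 1.89 ^ n`. -/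
theorem stmt9 (n : ℕ) (hn : 1 ≤ n) :
    (∑ i ∈ Finset.range (n / 3 + 1), (n.choose i : ℝ)) < 1.89 ^ n := by
  have hchernoff := sum_range_choose_mul_pow_le n (n / 3) (x := 1 / 2) (by norm_num) (by norm_num)
  calc (∑ i ∈ Finset.range (n / 3 + 1), (n.choose i : ℝ))
      ≤ (1 + 1 / 2) ^ n / (1 / 2) ^ (n / 3) := (le_div_iff₀ (by positivity)).2 hchernoff
    _ = (3 / 2) ^ n * 2 ^ (n / 3) := by rw [one_div 2, inv_pow, div_inv_eq_mul]; norm_num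
    _ < 1.89 ^ n := three_halves_pow_mul_two_pow_div_three_lt n hn
end

section
/- Let k ≥ 2, let G = (V,E) be a finite simple graph with edge weights w : E → ℕ, let S ⊆ V carry a partial coloring c : S → [k], and suppose the subgraph of G induced on V ∖ S is a tree T, rooted at some r ∈ V ∖ S. For v ∈ V ∖ S let D(v) denote the vertex set of the subtree of T rooted at v, and for i ∈ [k] define M_v(i) as the maximum, over all full colorings assigning color i to v, agreeing with c on S, of the total weight of happy edges e such that e has at least one endpoint in D(v) and both endpoints of e lie in D(v) ∪ S. Then: (1) if v is a leaf of T, M_v(i) = ∑ w(vu) over neighbors u ∈ S of v with c(u) = i; (2) if v has children u_1, …, u_d in T, then M_v(i) = ∑_{u ∈ N(v) ∩ S, c(u)=i} w(vu) + ∑_{j=1}^{d} max( w(v u_j) + M_{u_j}(i), max_{i' ∈ [k], i' ≠ i} M_{u_j}(i') ); and (3) the maximum over all extensions of c of the total weight of happy edges of G equals W_p + max_{i ∈ [k]} M_r(i), where W_p is the total weight of edges with both endpoints in S whose endpoints share a color under c. -/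
/-!
Write `F_v(c')` (`happyWeightBelow`) for the weight of the `c'`-happy edges below `v`, i.e. with
an endpoint in the subtree `D(v)` and both endpoints in `D(v) ∪ S`, so that `M_v(i)` is the
maximum of `F_v` over the extensions `c'` of `c` with `c'(v) = i`. An edge below `v` joins `v` to
`S`, or joins `v` to a child, or lies below exactly one child `u`: subtrees of distinct children
are disjoint, and a tree edge leaving `D(u)` ends at the parent of `u`. Hence `F_v` splits over
the children, and since `F_u` only depends on the colours on `D(u) ∪ S`, optimal colourings of
the children's subtrees can be chosen independently and glued together. At the root, every edge
not inside `S` lies below `r`.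
-/

open Finset
open scoped Classical

/-- The subgraph of `G` induced on the uncolored vertices `V ∖ S`. -/
def treeOf {V : Type*} (G : SimpleGraph V) (S : Finset V) :
    SimpleGraph ↥((↑S : Set V)ᶜ) :=
  G.induce ((↑S : Set V)ᶜ)

/-- `D(v)`: the vertex set of the subtree rooted at `v` of the tree `T` (the subgraph induced on
`V ∖ S`) rooted at `r`, i.e. the vertices `u` of `T` with `dist r u = dist r v + dist v u`
(those whose path from the root passes through `v`), regarded as a set of vertices of `G`. -/
def subtreeSet {V : Type*} (G : SimpleGraph V) (S : Finset V)
    (r v : ↥((↑S : Set V)ᶜ)) : Set V :=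
  {x : V | ∃ u : ↥((↑S : Set V)ᶜ), ↑u = x ∧
    (treeOf G S).dist r u = (treeOf G S).dist r v + (treeOf G S).dist v u}

/-- The children of `v` in the tree `T` rooted at `r`: the neighbors of `v` in `T` lying one
step further from the root. -/
noncomputable def childrenOf {V : Type*} [Fintype V] (G : SimpleGraph V) (S : Finset V)
    (r v : ↥((↑S : Set V)ᶜ)) : Finset ↥((↑S : Set V)ᶜ) :=
  Finset.univ.filter (fun u => (treeOf G S).Adj v u ∧
    (treeOf G S).dist r u = (treeOf G S).dist r v + 1)

/-- `M_v(i)`: the maximum, over all full colorings assigning color `i` to `v` and agreeing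
with the precoloring `c` on `S`, of the total weight of the happy edges having at least one
endpoint in `D(v)` and both endpoints in `D(v) ∪ S`. -/
noncomputable def Mval {V : Type*} [Fintype V] {k : ℕ} (G : SimpleGraph V) (w : Sym2 V → ℕ)
    (S : Finset V) (c : V → Fin k) (r v : ↥((↑S : Set V)ᶜ)) (i : Fin k) : ℕ :=
  sSup {m : ℕ | ∃ c' : V → Fin k, c' ↑v = i ∧ (∀ x ∈ S, c' x = c x) ∧
    m = ∑ e ∈ G.edgeFinset.filter (fun e =>
        (∀ x ∈ e, ∀ y ∈ e, c' x = c' y) ∧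
        (∃ x ∈ e, x ∈ subtreeSet G S r v) ∧
        (∀ x ∈ e, x ∈ subtreeSet G S r v ∪ (↑S : Set V))), w e}

namespace SimpleGraph

variable {α : Type*} {T : SimpleGraph α} {r v u a b ch : α}

def InSubtree (T : SimpleGraph α) (r v u : α) : Prop :=
  T.dist r u = T.dist r v + T.dist v u

def IsChild (T : SimpleGraph α) (r v u : α) : Prop :=
  T.Adj v u ∧ T.dist r u = T.dist r v + 1

lemma inSubtree_self (T : SimpleGraph α) (r v : α) : InSubtree T r v v := by
  simp [InSubtree]

lemma inSubtree_root (T : SimpleGraph α) (r u : α) : InSubtree T r r u := by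
  simp [InSubtree]

lemma InSubtree.dist_le (h : InSubtree T r v u) : T.dist r v ≤ T.dist r u := by
  unfold InSubtree at h
  omega

lemma InSubtree.trans (hc : T.Connected) (h₁ : InSubtree T r a v) (h₂ : InSubtree T r v u) :
    InSubtree T r a u := by
  have := hc.dist_triangle (u := a) (v := v) (w := u)
  have := hc.dist_triangle (u := r) (v := a) (w := u)
  unfold InSubtree at *
  omega

lemma IsChild.inSubtree (h : IsChild T r v u) : InSubtree T r v u := by
  rw [InSubtree, dist_eq_one_iff_adj.2 h.1]
  exact h.2

lemma isChild_of_adj_of_inSubtree (hadj : T.Adj v u) (h : InSubtree T r v u) :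
    IsChild T r v u := by
  rw [InSubtree, dist_eq_one_iff_adj.2 hadj] at h
  exact ⟨hadj, h⟩

lemma IsChild.not_inSubtree (h : IsChild T r v u) : ¬InSubtree T r u v := fun h' => by
  have := h'.dist_le
  have := h.2
  omega

lemma InSubtree.exists_isChild (hc : T.Connected) (h : InSubtree T r v u) (hne : u ≠ v) :
    ∃ ch, IsChild T r v ch ∧ InSubtree T r ch u := by
  obtain ⟨p, hp⟩ := hc.exists_walk_length_eq_dist v u
  cases p with
  | nil => exact absurd rfl hne
  | @cons _ ch _ hadj q =>
    have := SimpleGraph.dist_le q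
    have := hc.dist_triangle (u := v) (v := ch) (w := u)
    have := hc.dist_triangle (u := r) (v := v) (w := ch)
    have := hc.dist_triangle (u := r) (v := ch) (w := u)
    rw [Walk.length_cons] at hp
    rw [dist_eq_one_iff_adj.2 hadj] at *
    unfold InSubtree at *
    exact ⟨ch, ⟨hadj, by omega⟩, by omega⟩

lemma IsTree.eq_of_inSubtree (ht : T.IsTree) (ha : InSubtree T r a u) (hb : InSubtree T r b u)
    (hd : T.dist r a = T.dist r b) : a = b := by
  -- `x` is the vertex at depth `dist r x` on the unique path from `r` to `u`
  have key : ∀ x, InSubtree T r x u → ∃ p : T.Walk r u, p.IsPath ∧ p.getVert (T.dist r x) = x := by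
    intro x hx
    obtain ⟨p, hp⟩ := ht.connected.exists_walk_length_eq_dist r x
    obtain ⟨q, hq⟩ := ht.connected.exists_walk_length_eq_dist x u
    refine ⟨p.append q, (p.append q).isPath_of_length_eq_dist ?_, ?_⟩
    · rw [Walk.length_append, hp, hq]
      exact hx.symm
    · rw [Walk.getVert_append', if_pos hp.ge, ← hp, Walk.getVert_length]
  obtain ⟨p, hp, hpa⟩ := key a ha
  obtain ⟨q, hq, hqb⟩ := key b hb
  obtain ⟨_, -, huniq⟩ := ht.existsUnique_path r u
  rw [← hpa, ← hqb, hd, huniq p hp, huniq q hq]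

lemma IsTree.inSubtree_of_adj (ht : T.IsTree) (hch : IsChild T r v ch) (ha : InSubtree T r ch a)
    (hadj : T.Adj a b) (hb : InSubtree T r v b) (hbv : b ≠ v) : InSubtree T r ch b := by
  rcases ht.dist_eq_dist_add_one_of_adj r hadj with hab | hba
  · -- `b` is the parent of `a`, and the child of `v` above `b` is also above `a`
    obtain ⟨ch', hch', hb'⟩ := hb.exists_isChild ht.connected hbv
    have hach' : InSubtree T r ch' a :=
      hb'.trans ht.connected (isChild_of_adj_of_inSubtree hadj.symm ?_).inSubtree
    · rwa [ht.eq_of_inSubtree ha hach' (by rw [hch.2, hch'.2])]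
    · rw [InSubtree, dist_eq_one_iff_adj.2 hadj.symm]
      exact hab
  · exact ha.trans ht.connected (IsChild.inSubtree ⟨hadj, hba⟩)

end SimpleGraph

open SimpleGraph

def IsHappy {V β : Type*} (c : V → β) (e : Sym2 V) : Prop :=
  ∀ x ∈ e, ∀ y ∈ e, c x = c y

def IsEdgeBelow {V : Type*} (G : SimpleGraph V) (S : Finset V) (r v : ↥((↑S : Set V)ᶜ))
    (e : Sym2 V) : Prop :=
  (∃ x ∈ e, x ∈ subtreeSet G S r v) ∧ ∀ x ∈ e, x ∈ subtreeSet G S r v ∪ ↑S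

noncomputable def happyWeightBelow {V β : Type*} [Fintype V] (G : SimpleGraph V)
    (w : Sym2 V → ℕ) (S : Finset V) (r v : ↥((↑S : Set V)ᶜ)) (c : V → β) : ℕ :=
  ∑ e ∈ G.edgeFinset with IsHappy c e ∧ IsEdgeBelow G S r v e, w e

lemma Mval_eq_sSup {V : Type*} [Fintype V] {k : ℕ} (G : SimpleGraph V) (w : Sym2 V → ℕ)
    (S : Finset V) (c : V → Fin k) (r v : ↥((↑S : Set V)ᶜ)) (i : Fin k) :
    Mval G w S c r v i = sSup {m : ℕ | ∃ c' : V → Fin k, c' ↑v = i ∧ (∀ x ∈ S, c' x = c x) ∧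
    m = happyWeightBelow G w S r v c'} := by
  -- the two sides differ only in their `Decidable` instances
  unfold Mval happyWeightBelow IsHappy IsEdgeBelow
  congr!

section Subtrees

variable {V : Type*} {G : SimpleGraph V} {S : Finset V} {r v u ch ch₁ ch₂ : ↥((↑S : Set V)ᶜ)}
  {x : V}

lemma coe_mem_subtreeSet : (u : V) ∈ subtreeSet G S r v ↔ InSubtree (treeOf G S) r v u :=
  ⟨fun ⟨_, hu, h⟩ => Subtype.ext hu ▸ h, fun h => ⟨u, rfl, h⟩⟩

lemma notMem_of_mem_subtreeSet (hx : x ∈ subtreeSet G S r v) : x ∉ S := by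
  obtain ⟨u, rfl, -⟩ := hx
  exact u.2

lemma ne_coe_of_mem (hx : x ∈ S) : x ≠ v := fun h => v.2 (Finset.mem_coe.2 (h ▸ hx))

lemma mem_subtreeSet_self_iff : x ∈ subtreeSet G S r r ↔ x ∉ S :=
  ⟨notMem_of_mem_subtreeSet, fun hx => ⟨⟨x, hx⟩, rfl, inSubtree_root _ r _⟩⟩

variable [Fintype V]

lemma mem_childrenOf_iff : ch ∈ childrenOf G S r v ↔ IsChild (treeOf G S) r v ch := by
  simp [childrenOf, IsChild]

lemma subtreeSet_subset_of_mem_childrenOf (hc : (treeOf G S).Connected)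
    (hch : ch ∈ childrenOf G S r v) : subtreeSet G S r ch ⊆ subtreeSet G S r v := by
  rintro _ ⟨u, rfl, hu⟩
  exact ⟨u, rfl, (mem_childrenOf_iff.1 hch).inSubtree.trans hc hu⟩

lemma coe_notMem_subtreeSet_of_mem_childrenOf (hch : ch ∈ childrenOf G S r v) :
    (v : V) ∉ subtreeSet G S r ch := fun h =>
  (mem_childrenOf_iff.1 hch).not_inSubtree (coe_mem_subtreeSet.1 h)

lemma eq_of_mem_subtreeSet_of_mem_childrenOf (ht : (treeOf G S).IsTree)
    (h₁ : ch₁ ∈ childrenOf G S r v) (h₂ : ch₂ ∈ childrenOf G S r v)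
    (hx₁ : x ∈ subtreeSet G S r ch₁) (hx₂ : x ∈ subtreeSet G S r ch₂) : ch₁ = ch₂ := by
  obtain ⟨u, rfl, hu⟩ := hx₁
  refine ht.eq_of_inSubtree hu (coe_mem_subtreeSet.1 hx₂) ?_
  rw [(mem_childrenOf_iff.1 h₁).2, (mem_childrenOf_iff.1 h₂).2]

end Subtrees

section Edges

variable {V β : Type*} {G : SimpleGraph V} {S : Finset V} {r v ch ch₁ ch₂ : ↥((↑S : Set V)ᶜ)}
  {e : Sym2 V}

lemma isHappy_mk {c : V → β} {a b : V} : IsHappy c s(a, b) ↔ c a = c b := by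
  simp only [IsHappy, Sym2.mem_iff, forall_eq_or_imp, forall_eq]
  grind

lemma isEdgeBelow_mk {a b : V} :
    IsEdgeBelow G S r v s(a, b) ↔ (a ∈ subtreeSet G S r v ∨ b ∈ subtreeSet G S r v) ∧
      a ∈ subtreeSet G S r v ∪ ↑S ∧ b ∈ subtreeSet G S r v ∪ ↑S := by
  simp only [IsEdgeBelow, Sym2.mem_iff, exists_eq_or_imp, exists_eq_left, forall_eq_or_imp,
    forall_eq]

lemma isEdgeBelow_self_iff :
    IsEdgeBelow G S r r e ↔ ¬∀ x ∈ e, x ∈ S := by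
  simp only [IsEdgeBelow, Set.mem_union, mem_subtreeSet_self_iff, Finset.mem_coe, em',
    implies_true, and_true, not_forall, exists_prop]

variable [Fintype V]

lemma isEdgeBelow_iff (ht : (treeOf G S).IsTree) (he : e ∈ G.edgeSet) :
    IsEdgeBelow G S r v e ↔ (∃ u ∈ S, e = s(↑v, u)) ∨
      (∃ ch ∈ childrenOf G S r v, e = s(↑v, ↑ch)) ∨
      ∃ ch ∈ childrenOf G S r v, IsEdgeBelow G S r ch e := by
  have hv : (v : V) ∈ subtreeSet G S r v := coe_mem_subtreeSet.2 (inSubtree_self _ r v)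
  constructor
  · rintro ⟨⟨a, hae, ha⟩, hall⟩
    obtain ⟨b, rfl⟩ := Sym2.mem_iff_exists.1 hae
    obtain ⟨a, rfl, ha⟩ := ha
    have hb := hall b (Sym2.mem_mk_right _ _)
    by_cases hav : a = v
    · subst hav
      rcases hb with ⟨b, rfl, hb⟩ | hbS
      · exact Or.inr (Or.inl ⟨b, mem_childrenOf_iff.2 (isChild_of_adj_of_inSubtree he hb), rfl⟩)
      · exact Or.inl ⟨b, hbS, rfl⟩
    obtain ⟨ch, hch, hach⟩ := InSubtree.exists_isChild ht.connected ha hav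
    have haD := coe_mem_subtreeSet.2 hach
    rcases hb with ⟨b, rfl, hb⟩ | hbS
    · by_cases hbv : b = v
      · subst hbv
        exact Or.inr (Or.inl ⟨a, mem_childrenOf_iff.2
          (isChild_of_adj_of_inSubtree (G.adj_symm he) ha), Sym2.eq_swap⟩)
      · have hbD := coe_mem_subtreeSet.2 (ht.inSubtree_of_adj hch hach he hb hbv)
        exact Or.inr (Or.inr ⟨ch, mem_childrenOf_iff.2 hch,
          isEdgeBelow_mk.2 ⟨Or.inl haD, Or.inl haD, Or.inl hbD⟩⟩)
    · exact Or.inr (Or.inr ⟨ch, mem_childrenOf_iff.2 hch,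
        isEdgeBelow_mk.2 ⟨Or.inl haD, Or.inl haD, Or.inr hbS⟩⟩)
  · have hsub : ∀ {ch}, ch ∈ childrenOf G S r v → subtreeSet G S r ch ⊆ subtreeSet G S r v :=
      subtreeSet_subset_of_mem_childrenOf ht.connected
    rintro (⟨u, hu, rfl⟩ | ⟨ch, hch, rfl⟩ | ⟨ch, hch, ⟨x, hx, hxD⟩, hall⟩)
    · exact isEdgeBelow_mk.2 ⟨Or.inl hv, Or.inl hv, Or.inr hu⟩
    · exact isEdgeBelow_mk.2 ⟨Or.inl hv, Or.inl hv, Or.inl (hsub hch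
        (coe_mem_subtreeSet.2 (inSubtree_self _ r ch)))⟩
    · exact ⟨⟨x, hx, hsub hch hxD⟩, fun y hy => (hall y hy).imp_left fun h => hsub hch h⟩

lemma not_isEdgeBelow_of_coe_mem (hch : ch ∈ childrenOf G S r v) (hv : (v : V) ∈ e) :
    ¬IsEdgeBelow G S r ch e := fun h =>
  (h.2 _ hv).elim (coe_notMem_subtreeSet_of_mem_childrenOf hch) v.2

lemma eq_of_isEdgeBelow (ht : (treeOf G S).IsTree) (h₁ : ch₁ ∈ childrenOf G S r v)
    (h₂ : ch₂ ∈ childrenOf G S r v) (he₁ : IsEdgeBelow G S r ch₁ e)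
    (he₂ : IsEdgeBelow G S r ch₂ e) : ch₁ = ch₂ := by
  obtain ⟨x, hx, hx₁⟩ := he₁.1
  exact eq_of_mem_subtreeSet_of_mem_childrenOf ht h₁ h₂ hx₁
    ((he₂.2 x hx).resolve_right (notMem_of_mem_subtreeSet hx₁))

end Edges

section HappyWeight

variable {V β : Type*} [Fintype V] {G : SimpleGraph V} (w : Sym2 V → ℕ)

lemma sum_filter_edgeFinset_eq_sum_incident {ι : Type*} {f : ι → V} (hf : Function.Injective f) {s : Finset ι}
    {a : V} (hs : ∀ i ∈ s, G.Adj a (f i)) {p : Sym2 V → Prop} [DecidablePred p]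
    (hp : ∀ e ∈ G.edgeSet, p e ↔ ∃ i ∈ s, e = s(a, f i)) :
    ∑ e ∈ G.edgeFinset with p e, w e = ∑ i ∈ s, w s(a, f i) := by
  rw [← sum_image fun i _ j _ h => hf (Sym2.congr_right.1 h)]
  congr 1
  ext e
  simp only [mem_filter, mem_image, mem_edgeFinset]
  constructor
  · rintro ⟨he, hpe⟩
    obtain ⟨i, hi, rfl⟩ := (hp e he).1 hpe
    exact ⟨i, hi, rfl⟩
  · rintro ⟨i, hi, rfl⟩
    exact ⟨hs i hi, (hp _ (hs i hi)).2 ⟨i, hi, rfl⟩⟩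

variable {S : Finset V} {r v : ↥((↑S : Set V)ᶜ)}

lemma sum_childrenOf_happyWeightBelow (ht : (treeOf G S).IsTree) (c : V → β) :
    ∑ ch ∈ childrenOf G S r v, happyWeightBelow G w S r ch c =
      ∑ e ∈ G.edgeFinset with IsHappy c e ∧ ∃ ch ∈ childrenOf G S r v, IsEdgeBelow G S r ch e,
        w e := by
  simp only [happyWeightBelow]
  rw [← sum_biUnion fun ch₁ h₁ ch₂ h₂ hne => disjoint_left.2 fun e he₁ he₂ =>
    hne (eq_of_isEdgeBelow ht h₁ h₂ (mem_filter.1 he₁).2.2 (mem_filter.1 he₂).2.2)]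
  congr 1
  ext e
  simp only [mem_filter, mem_biUnion]
  aesop

lemma happyWeightBelow_eq_add_sum_childrenOf [DecidableEq β] (ht : (treeOf G S).IsTree) (c : V → β) :
    happyWeightBelow G w S r v c =
      (∑ u ∈ univ with G.Adj v u ∧ u ∈ S ∧ c u = c v, w s(↑v, u)) +
        ∑ ch ∈ childrenOf G S r v,
          ((if c ch = c v then w s(↑v, ↑ch) else 0) + happyWeightBelow G w S r ch c) := by
  have hsplit : ∀ e ∈ G.edgeFinset, IsHappy c e ∧ IsEdgeBelow G S r v e ↔
      (IsHappy c e ∧ ∃ u ∈ S, e = s(↑v, u)) ∨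
      (IsHappy c e ∧ ∃ ch ∈ childrenOf G S r v, e = s(↑v, ↑ch)) ∨
      (IsHappy c e ∧ ∃ ch ∈ childrenOf G S r v, IsEdgeBelow G S r ch e) := fun e he => by
    rw [isEdgeBelow_iff ht (mem_edgeFinset.1 he), and_or_left, and_or_left]
  rw [happyWeightBelow, filter_congr hsplit, filter_or, sum_union, filter_or, sum_union,
    sum_add_distrib, sum_ite, sum_const_zero, add_zero]
  · refine congrArg₂ (· + ·) ?_ (congrArg₂ (· + ·) ?_ ?_)
    · refine sum_filter_edgeFinset_eq_sum_incident w Function.injective_id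
        (fun u hu => (mem_filter.1 hu).2.1) fun e he => ⟨?_, ?_⟩
      · rintro ⟨hc, u, hu, rfl⟩
        exact ⟨u, mem_filter.2 ⟨mem_univ _, he, hu, (isHappy_mk.1 hc).symm⟩, rfl⟩
      · rintro ⟨u, hu, rfl⟩
        obtain ⟨-, -, hu, hcu⟩ := mem_filter.1 hu
        exact ⟨isHappy_mk.2 hcu.symm, u, hu, rfl⟩
    · refine sum_filter_edgeFinset_eq_sum_incident w Subtype.val_injective
        (fun ch hch => (mem_childrenOf_iff.1 (mem_filter.1 hch).1).1) fun e he => ⟨?_, ?_⟩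
      · rintro ⟨hc, ch, hch, rfl⟩
        exact ⟨ch, mem_filter.2 ⟨hch, (isHappy_mk.1 hc).symm⟩, rfl⟩
      · rintro ⟨ch, hch, rfl⟩
        obtain ⟨hch, hcch⟩ := mem_filter.1 hch
        exact ⟨isHappy_mk.2 hcch.symm, ch, hch, rfl⟩
    · exact (sum_childrenOf_happyWeightBelow w ht c).symm
  · exact disjoint_filter.2 fun e _ ⟨_, _, _, he⟩ ⟨_, ch, hch, hB⟩ =>
      not_isEdgeBelow_of_coe_mem hch (he ▸ Sym2.mem_mk_left _ _) hB
  · refine disjoint_filter.2 fun e _ ⟨_, u, hu, he⟩ h => h.elim ?_ ?_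
    · rintro ⟨_, ch, -, rfl⟩
      exact ch.2 (Sym2.congr_right.1 he ▸ hu)
    · rintro ⟨_, ch, hch, hB⟩
      exact not_isEdgeBelow_of_coe_mem hch (he ▸ Sym2.mem_mk_left _ _) hB

end HappyWeight

section Optimum

variable {V : Type*} [Fintype V] {k : ℕ} {G : SimpleGraph V} {w : Sym2 V → ℕ} {S : Finset V}
  {c : V → Fin k} {r v u : ↥((↑S : Set V)ᶜ)} {i : Fin k}

lemma happyWeightBelow_congr {β : Type*} {c₁ c₂ : V → β}
    (h : ∀ x ∈ subtreeSet G S r v ∪ ↑S, c₁ x = c₂ x) :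
    happyWeightBelow G w S r v c₁ = happyWeightBelow G w S r v c₂ :=
  sum_congr (filter_congr fun _ _ => and_congr_left fun hb => forall₂_congr fun x hx =>
    forall₂_congr fun y hy => by rw [h x (hb.2 x hx), h y (hb.2 y hy)]) fun _ _ => rfl

variable (G w S c r v i) in
lemma isGreatest_Mval :
    IsGreatest {m | ∃ c' : V → Fin k, c' v = i ∧ (∀ x ∈ S, c' x = c x) ∧
      m = happyWeightBelow G w S r v c'} (Mval G w S c r v i) := by
  have hbdd : BddAbove {m | ∃ c' : V → Fin k, c' v = i ∧ (∀ x ∈ S, c' x = c x) ∧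
      m = happyWeightBelow G w S r v c'} := by
    refine ⟨∑ e ∈ G.edgeFinset, w e, ?_⟩
    rintro _ ⟨c', -, -, rfl⟩
    exact sum_le_sum_of_subset (filter_subset _ _)
  rw [Mval_eq_sSup]
  refine ⟨Nat.sSup_mem ⟨_, Function.update c v i, Function.update_self .., fun x hx =>
    Function.update_of_ne (ne_coe_of_mem hx) .., rfl⟩ hbdd, fun _ => le_csSup hbdd⟩

lemma ite_add_happyWeightBelow_le (a : ℕ) {c' : V → Fin k} (hc' : ∀ x ∈ S, c' x = c x) :
    (if c' u = i then a else 0) + happyWeightBelow G w S r u c' ≤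
      max (a + Mval G w S c r u i) ((univ.filter fun i' => i' ≠ i).sup (Mval G w S c r u)) := by
  have hle := (isGreatest_Mval G w S c r u _).2 ⟨c', rfl, hc', rfl⟩
  split_ifs with h
  · exact le_max_of_le_left (h ▸ Nat.add_le_add_left hle a)
  · exact le_max_of_le_right ((zero_add _).trans_le (hle.trans (le_sup (by simpa using h))))

variable (G w S c r u i) in
lemma exists_ite_add_happyWeightBelow_eq (a : ℕ) :
    ∃ c' : V → Fin k, (∀ x ∈ S, c' x = c x) ∧
      (if c' u = i then a else 0) + happyWeightBelow G w S r u c' =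
        max (a + Mval G w S c r u i) ((univ.filter fun i' => i' ≠ i).sup (Mval G w S c r u)) := by
  by_cases h : (univ.filter fun i' => i' ≠ i).sup (Mval G w S c r u) ≤ a + Mval G w S c r u i
  · obtain ⟨c', hu, hc', hM⟩ := (isGreatest_Mval G w S c r u i).1
    exact ⟨c', hc', by rw [if_pos hu, ← hM, max_eq_left h]⟩
  · -- the supremum is positive, so some colour `≠ i` exists
    have hne : (univ.filter fun i' => i' ≠ i).Nonempty :=
      nonempty_iff_ne_empty.2 fun hemp => h (by simp [hemp])
    obtain ⟨j, hj, hjM⟩ := exists_mem_eq_sup _ hne (Mval G w S c r u)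
    obtain ⟨c', hu, hc', hM⟩ := (isGreatest_Mval G w S c r u j).1
    refine ⟨c', hc', ?_⟩
    rw [if_neg (hu ▸ (mem_filter.1 hj).2), zero_add, ← hM, max_eq_right (le_of_not_ge h), hjM]

lemma exists_extension_eqOn_subtreeSet (ht : (treeOf G S).IsTree) (v : ↥((↑S : Set V)ᶜ))
    (i : Fin k) (f : ↥((↑S : Set V)ᶜ) → V → Fin k) (hf : ∀ u, ∀ x ∈ S, f u x = c x) :
    ∃ g : V → Fin k, g v = i ∧ (∀ x ∈ S, g x = c x) ∧
      ∀ ch ∈ childrenOf G S r v, ∀ x ∈ subtreeSet G S r ch ∪ ↑S, g x = f ch x := by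
  let g x := if h : ∃ ch ∈ childrenOf G S r v, x ∈ subtreeSet G S r ch then f h.choose x
    else Function.update c v i x
  have hgS : ∀ x ∈ S, g x = c x := fun x hx => by
    dsimp only [g]
    rw [dif_neg fun ⟨_, _, hx'⟩ => notMem_of_mem_subtreeSet hx' hx,
      Function.update_of_ne (ne_coe_of_mem hx)]
  refine ⟨g, ?_, hgS, fun ch hch x hx => hx.elim (fun hx => ?_) fun hx => ?_⟩
  · dsimp only [g]
    rw [dif_neg fun ⟨_, hch, hv⟩ => coe_notMem_subtreeSet_of_mem_childrenOf hch hv,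
      Function.update_self]
  · have h : ∃ ch ∈ childrenOf G S r v, x ∈ subtreeSet G S r ch := ⟨ch, hch, hx⟩
    dsimp only [g]
    rw [dif_pos h, eq_of_mem_subtreeSet_of_mem_childrenOf ht h.choose_spec.1 hch
      h.choose_spec.2 hx]
  · rw [hgS x hx, hf ch x hx]

theorem Mval_eq_add_sum_childrenOf (ht : (treeOf G S).IsTree) (v : ↥((↑S : Set V)ᶜ)) (i : Fin k) :
    Mval G w S c r v i =
      (∑ u ∈ univ with G.Adj v u ∧ u ∈ S ∧ c u = i, w s(↑v, u)) +
        ∑ ch ∈ childrenOf G S r v, max (w s(↑v, ↑ch) + Mval G w S c r ch i)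
          ((univ.filter fun i' => i' ≠ i).sup (Mval G w S c r ch)) := by
  have hF : ∀ c' : V → Fin k, c' v = i → (∀ x ∈ S, c' x = c x) →
      happyWeightBelow G w S r v c' =
        (∑ u ∈ univ with G.Adj v u ∧ u ∈ S ∧ c u = i, w s(↑v, u)) +
          ∑ ch ∈ childrenOf G S r v,
            ((if c' ch = i then w s(↑v, ↑ch) else 0) + happyWeightBelow G w S r ch c') := by
    intro c' hv hc'
    rw [happyWeightBelow_eq_add_sum_childrenOf w ht, hv]
    congr 1
    exact sum_congr (filter_congr fun u _ => and_congr_right fun _ =>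
      and_congr_right fun hu => by rw [hc' u hu]) fun _ _ => rfl
  apply le_antisymm
  · obtain ⟨c', hv, hc', hM⟩ := (isGreatest_Mval G w S c r v i).1
    rw [hM, hF c' hv hc']
    exact Nat.add_le_add_left (sum_le_sum fun ch _ => ite_add_happyWeightBelow_le _ hc') _
  · choose f hf hfM using fun ch : ↥((↑S : Set V)ᶜ) =>
      exists_ite_add_happyWeightBelow_eq G w S c r ch i (w s(↑v, ↑ch))
    obtain ⟨g, hgv, hg, hgf⟩ := exists_extension_eqOn_subtreeSet ht v i f hf
    refine le_of_eq_of_le ?_ ((isGreatest_Mval G w S c r v i).2 ⟨g, hgv, hg, rfl⟩)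
    rw [hF g hgv hg]
    refine congrArg _ (sum_congr rfl fun ch hch => ?_)
    rw [← hfM, hgf ch hch ch (Or.inl (coe_mem_subtreeSet.2 (inSubtree_self _ r ch))),
      happyWeightBelow_congr (hgf ch hch)]

end Optimum

section Root

variable {V : Type*} [Fintype V] {k : ℕ} {G : SimpleGraph V} {w : Sym2 V → ℕ} {S : Finset V}
  {c : V → Fin k}

variable (G w S) in
noncomputable def precoloredHappyWeight (c : V → Fin k) : ℕ :=
  ∑ e ∈ G.edgeFinset.filter (fun e => (∀ x ∈ e, x ∈ S) ∧ ∀ x ∈ e, ∀ y ∈ e, c x = c y), w e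

lemma happyEdgeWeight_eq (r : ↥((↑S : Set V)ᶜ)) (c' : V → Fin k) :
    happyEdgeWeight G w c' = precoloredHappyWeight G w S c' + happyWeightBelow G w S r r c' := by
  rw [happyEdgeWeight, ← sum_filter_add_sum_filter_not _ fun e => ∀ x ∈ e, x ∈ S,
    filter_filter, filter_filter]
  exact congrArg₂ (· + ·) (sum_congr (filter_congr fun _ _ => and_comm) fun _ _ => rfl)
    (sum_congr (filter_congr fun _ _ => and_congr_right' isEdgeBelow_self_iff.symm)
      fun _ _ => rfl)

lemma precoloredHappyWeight_congr {c' : V → Fin k} (hc' : ∀ x ∈ S, c' x = c x) :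
    precoloredHappyWeight G w S c' = precoloredHappyWeight G w S c :=
  sum_congr (filter_congr fun _ _ => and_congr_right fun hS => forall₂_congr fun x hx =>
    forall₂_congr fun y hy => by rw [hc' x (hS x hx), hc' y (hS y hy)]) fun _ _ => rfl

theorem sSup_happyEdgeWeight_eq (r : ↥((↑S : Set V)ᶜ)) :
    sSup {m : ℕ | ∃ c' : V → Fin k, (∀ x ∈ S, c' x = c x) ∧ m = happyEdgeWeight G w c'} =
      precoloredHappyWeight G w S c + univ.sup (Mval G w S c r r) := by
  have key : ∀ c' : V → Fin k, (∀ x ∈ S, c' x = c x) →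
      happyEdgeWeight G w c' = precoloredHappyWeight G w S c + happyWeightBelow G w S r r c' :=
    fun c' hc' => by rw [happyEdgeWeight_eq r, precoloredHappyWeight_congr hc']
  obtain ⟨i, -, hi⟩ := exists_mem_eq_sup univ ⟨c r, mem_univ _⟩ (Mval G w S c r r)
  obtain ⟨c', -, hc', hM⟩ := (isGreatest_Mval G w S c r r i).1
  refine IsGreatest.csSup_eq ⟨⟨c', hc', by rw [key c' hc', hi, hM]⟩, ?_⟩
  rintro _ ⟨c', hc', rfl⟩
  rw [key c' hc']
  exact Nat.add_le_add_left
    (((isGreatest_Mval G w S c r r _).2 ⟨c', rfl, hc', rfl⟩).trans (le_sup (mem_univ _))) _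

end Root

theorem stmt10_general {V : Type*} [Fintype V] (k : ℕ)
    (G : SimpleGraph V) (w : Sym2 V → ℕ) (S : Finset V) (c : V → Fin k)
    (htree : (treeOf G S).IsTree) (r : ↥((↑S : Set V)ᶜ)) :
    (∀ (v : ↥((↑S : Set V)ᶜ)) (i : Fin k), childrenOf G S r v = ∅ →
      Mval G w S c r v i =
        ∑ u ∈ Finset.univ.filter (fun u => G.Adj ↑v u ∧ u ∈ S ∧ c u = i), w s(↑v, u)) ∧
    (∀ (v : ↥((↑S : Set V)ᶜ)) (i : Fin k), (childrenOf G S r v).Nonempty →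
      Mval G w S c r v i =
        (∑ u ∈ Finset.univ.filter (fun u => G.Adj ↑v u ∧ u ∈ S ∧ c u = i), w s(↑v, u)) +
        ∑ u ∈ childrenOf G S r v,
          max (w s(↑v, ↑u) + Mval G w S c r u i)
            ((Finset.univ.filter (fun i' : Fin k => i' ≠ i)).sup (Mval G w S c r u))) ∧
    sSup {m : ℕ | ∃ c' : V → Fin k, (∀ x ∈ S, c' x = c x) ∧ m = happyEdgeWeight G w c'} =
      (∑ e ∈ G.edgeFinset.filter
          (fun e => (∀ x ∈ e, x ∈ S) ∧ ∀ x ∈ e, ∀ y ∈ e, c x = c y), w e) +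
        (Finset.univ : Finset (Fin k)).sup (Mval G w S c r r) := by
  refine ⟨fun v i hleaf => ?_, fun v i _ => Mval_eq_add_sum_childrenOf htree v i, sSup_happyEdgeWeight_eq r⟩
  rw [Mval_eq_add_sum_childrenOf htree v i, hleaf, sum_empty, add_zero]

/-- Let `k ≥ 2`, let `G` be edge-weighted with partial coloring
`c : S → [k]`, and suppose the subgraph induced on `V ∖ S` is a tree `T`, rooted at
`r ∈ V ∖ S`.  Then:
(1) for every leaf `v` of `T` (a vertex with no children) and every color `i`,
    `M_v(i)` is the total weight of the edges from `v` to its neighbors in `S` of color `i`;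
(2) for every vertex `v` with children and every color `i`, `M_v(i)` equals that total weight
    plus `∑_{u child of v} max (w(vu) + M_u(i)) (max_{i' ≠ i} M_u(i'))`;
(3) the maximum over all extensions of `c` of the total weight of the happy edges of `G`
    equals `W_p + max_i M_r(i)`, where `W_p` is the total weight of the happy edges with both
    endpoints in `S`. -/
theorem stmt10 {V : Type*} [Fintype V] (k : ℕ) (hk : 2 ≤ k)
    (G : SimpleGraph V) (w : Sym2 V → ℕ) (S : Finset V) (c : V → Fin k)
    (htree : (treeOf G S).IsTree) (r : ↥((↑S : Set V)ᶜ)) :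
    (∀ (v : ↥((↑S : Set V)ᶜ)) (i : Fin k), childrenOf G S r v = ∅ →
      Mval G w S c r v i =
        ∑ u ∈ Finset.univ.filter (fun u => G.Adj ↑v u ∧ u ∈ S ∧ c u = i), w s(↑v, u)) ∧
    (∀ (v : ↥((↑S : Set V)ᶜ)) (i : Fin k), (childrenOf G S r v).Nonempty →
      Mval G w S c r v i =
        (∑ u ∈ Finset.univ.filter (fun u => G.Adj ↑v u ∧ u ∈ S ∧ c u = i), w s(↑v, u)) +
        ∑ u ∈ childrenOf G S r v,
          max (w s(↑v, ↑u) + Mval G w S c r u i)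
            ((Finset.univ.filter (fun i' : Fin k => i' ≠ i)).sup (Mval G w S c r u))) ∧
    sSup {m : ℕ | ∃ c' : V → Fin k, (∀ x ∈ S, c' x = c x) ∧ m = happyEdgeWeight G w c'} =
      (∑ e ∈ G.edgeFinset.filter
          (fun e => (∀ x ∈ e, x ∈ S) ∧ ∀ x ∈ e, ∀ y ∈ e, c x = c y), w e) +
        (Finset.univ : Finset (Fin k)).sup (Mval G w S c r r) :=
  stmt10_general k G w S c htree r
end

section
/- Let k ≥ 1, let G = (V,E) be a finite simple graph, and let c : S → [k] be a partial coloring. Say two vertices u and v have the same type if N(u) ∖ {v} = N(v) ∖ {u}, where N(x) denotes the open neighborhood of x. Then there exists an extension c' of c to a full k-coloring of G that maximizes the number of happy edges over all extensions of c and that, in addition, satisfies c'(u) = c'(v) for all u, v ∈ V ∖ S having the same type. -/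
/-!
Having the same type is an equivalence relation, and a class `C` of uncolored vertices of the
same type is a module: each vertex outside `C` is adjacent to all of `C` or to none of it.
Recoloring `C` with the color of a vertex of `C` having the most equally colored neighbours
outside `C` makes the edges inside `C` happy, leaves the edges outside `C` alone, and does not
lose happy edges between `C` and the rest. Starting from an optimal extension, each such step
strictly shrinks the set of same-type pairs with different colors, so the process ends at an
optimal extension that is constant on types.
-/

open Finset
open scoped Classical

namespace SimpleGraph

variable {V : Type*} {k : ℕ} (G : SimpleGraph V)

def happySubgraph (c : V → Fin k) : SimpleGraph V where
  Adj a b := G.Adj a b ∧ c a = c b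
  symm := ⟨fun _ _ h => ⟨h.1.symm, h.2.symm⟩⟩
  loopless := ⟨fun a h => G.loopless.irrefl a h.1⟩

theorem happyEdgeCount_eq_card_edgeFinset_happySubgraph [Fintype V] (c : V → Fin k) :
    happyEdgeCount G c = #(G.happySubgraph c).edgeFinset := by
  unfold happyEdgeCount
  congr 1
  ext e
  induction e using Sym2.ind with
  | _ a b =>
    simp only [mem_filter, mem_edgeFinset, mem_edgeSet, Sym2.mem_iff]
    change _ ↔ G.Adj a b ∧ c a = c b
    constructor
    · rintro ⟨hab, h⟩
      exact ⟨hab, h a (.inl rfl) b (.inr rfl)⟩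
    · rintro ⟨hab, hc⟩
      exact ⟨hab, by rintro x (rfl | rfl) y (rfl | rfl) <;> simp [hc]⟩

noncomputable def happyPairs (c : V → Fin k) (s t : Finset V) : ℕ :=
  ∑ a ∈ s, ∑ b ∈ t, if G.Adj a b ∧ c a = c b then 1 else 0

theorem two_mul_happyEdgeCount [Fintype V] (c : V → Fin k) :
    2 * happyEdgeCount G c = G.happyPairs c univ univ := by
  rw [happyEdgeCount_eq_card_edgeFinset_happySubgraph, two_mul_card_edgeFinset, card_filter,
    Fintype.sum_prod_type]
  unfold happyPairs happySubgraph
  convert rfl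

theorem happyPairs_comm (c : V → Fin k) (s t : Finset V) :
    G.happyPairs c s t = G.happyPairs c t s := by
  unfold happyPairs
  rw [sum_comm]
  simp only [G.adj_comm, eq_comm]

theorem happyPairs_univ [Fintype V] (c : V → Fin k) (C : Finset V) :
    G.happyPairs c univ univ =
      G.happyPairs c C C + 2 * G.happyPairs c C Cᶜ + G.happyPairs c Cᶜ Cᶜ := by
  have hsplit : ∀ s, G.happyPairs c s univ = G.happyPairs c s C + G.happyPairs c s Cᶜ :=
    fun s => by simp only [happyPairs, ← sum_add_distrib, sum_add_sum_compl]
  rw [happyPairs, ← sum_add_sum_compl C, ← happyPairs, ← happyPairs, hsplit, hsplit,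
    G.happyPairs_comm c Cᶜ C]
  ring

theorem exists_happyEdgeCount_le_piecewise [Fintype V] {C : Finset V} (hC : C.Nonempty)
    (hmod : ∀ a ∈ C, ∀ a' ∈ C, ∀ b ∉ C, (G.Adj a b ↔ G.Adj a' b)) (c : V → Fin k) :
    ∃ α, happyEdgeCount G c ≤ happyEdgeCount G (C.piecewise (fun _ => α) c) := by
  obtain ⟨a₀, ha₀⟩ := hC
  -- every vertex of `C` has `n β` neighbours of color `β` outside `C`
  let n : Fin k → ℕ := fun β => ∑ b ∈ Cᶜ, if G.Adj a₀ b ∧ β = c b then 1 else 0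
  have hcross : ∀ c' : V → Fin k, (∀ b ∉ C, c' b = c b) →
      G.happyPairs c' C Cᶜ = ∑ a ∈ C, n (c' a) := fun c' hc' =>
    sum_congr rfl fun a ha => sum_congr rfl fun b hb => by
      rw [mem_compl] at hb
      rw [hmod a ha a₀ ha₀ b hb, hc' b hb]
  obtain ⟨a₁, -, hmax⟩ := exists_max_image C (fun a => n (c a)) ⟨a₀, ha₀⟩
  refine ⟨c a₁, ?_⟩
  set c₁ := C.piecewise (fun _ => c a₁) c
  have hin : ∀ a ∈ C, c₁ a = c a₁ := fun a ha => piecewise_eq_of_mem _ _ _ ha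
  have hout : ∀ b ∉ C, c₁ b = c b := fun b hb => piecewise_eq_of_notMem _ _ _ hb
  have hinside : G.happyPairs c C C ≤ G.happyPairs c₁ C C :=
    sum_le_sum fun a ha => sum_le_sum fun b hb => by
      rw [hin a ha, hin b hb]
      split_ifs <;> simp_all
  have hcross_le : G.happyPairs c C Cᶜ ≤ G.happyPairs c₁ C Cᶜ := by
    rw [hcross c fun _ _ => rfl, hcross c₁ hout]
    exact sum_le_sum fun a ha => (hin a ha).symm ▸ hmax a ha
  have houtside : G.happyPairs c Cᶜ Cᶜ = G.happyPairs c₁ Cᶜ Cᶜ :=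
    sum_congr rfl fun a ha => sum_congr rfl fun b hb => by
      rw [hout a (mem_compl.1 ha), hout b (mem_compl.1 hb)]
  have h := G.two_mul_happyEdgeCount c
  have h₁ := G.two_mul_happyEdgeCount c₁
  rw [G.happyPairs_univ _ C] at h h₁
  omega

def SameType (u v : V) : Prop :=
  G.neighborSet u \ {v} = G.neighborSet v \ {u}

variable {G}

theorem sameType_iff {u v : V} :
    G.SameType u v ↔ ∀ w, w ≠ u → w ≠ v → (G.Adj u w ↔ G.Adj v w) := by
  simp only [SameType, Set.ext_iff, Set.mem_sdiff, mem_neighborSet, Set.mem_singleton_iff]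
  grind [G.irrefl]

theorem SameType.refl (u : V) : G.SameType u u := rfl

theorem SameType.symm {u v : V} (h : G.SameType u v) : G.SameType v u := Eq.symm h

theorem SameType.trans {u v w : V} (huv : G.SameType u v) (hvw : G.SameType v w) :
    G.SameType u w := by
  rw [sameType_iff] at *
  intro x hxu hxw
  by_cases hxv : x = v
  · subst hxv
    rcases eq_or_ne u w with rfl | huw
    · rfl
    calc G.Adj u x ↔ G.Adj w u := G.adj_comm u x |>.trans (hvw u (Ne.symm hxu) huw)
      _ ↔ G.Adj x w := G.adj_comm w u |>.trans (huv w (Ne.symm huw) (Ne.symm hxw))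
      _ ↔ G.Adj w x := G.adj_comm x w
  · exact (huv x hxu hxv).trans (hvw x hxv hxw)

variable (G)

noncomputable def discordantPairs [Fintype V] (S : Finset V) (c : V → Fin k) : Finset (V × V) :=
  {p | p.1 ∉ S ∧ p.2 ∉ S ∧ G.SameType p.1 p.2 ∧ c p.1 ≠ c p.2}

theorem exists_discordantPairs_ssubset [Fintype V] {S : Finset V} {c : V → Fin k}
    (h : (G.discordantPairs S c).Nonempty) :
    ∃ c₁ : V → Fin k, (∀ x ∈ S, c₁ x = c x) ∧ happyEdgeCount G c ≤ happyEdgeCount G c₁ ∧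
      G.discordantPairs S c₁ ⊂ G.discordantPairs S c := by
  obtain ⟨⟨u, v⟩, huv⟩ := h
  simp only [discordantPairs, mem_filter, mem_univ, true_and] at huv
  obtain ⟨hu, hv, htype, hne⟩ := huv
  set C : Finset V := {x | x ∉ S ∧ G.SameType u x} with hC
  have hmem : ∀ {x}, x ∈ C ↔ x ∉ S ∧ G.SameType u x := by simp [hC]
  have hmod : ∀ a ∈ C, ∀ a' ∈ C, ∀ b ∉ C, (G.Adj a b ↔ G.Adj a' b) := by
    intro a ha a' ha' b hb
    refine sameType_iff.1 ((hmem.1 ha).2.symm.trans (hmem.1 ha').2) b ?_ ?_ <;>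
      rintro rfl <;> contradiction
  obtain ⟨α, hle⟩ := G.exists_happyEdgeCount_le_piecewise ⟨u, hmem.2 ⟨hu, .refl u⟩⟩ hmod c
  have hin : ∀ x ∈ C, C.piecewise (fun _ => α) c x = α :=
    fun x hx => piecewise_eq_of_mem _ _ _ hx
  have hout : ∀ x ∉ C, C.piecewise (fun _ => α) c x = c x :=
    fun x hx => piecewise_eq_of_notMem _ _ _ hx
  refine ⟨C.piecewise (fun _ => α) c, fun x hx => hout x fun h => (hmem.1 h).1 hx, hle, ?_⟩
  refine ssubset_iff_of_subset ?_ |>.2 ⟨(u, v), ?_, ?_⟩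
  · intro ⟨x, y⟩ hxy
    simp only [discordantPairs, mem_filter, mem_univ, true_and] at hxy ⊢
    obtain ⟨hx, hy, hxy, hne⟩ := hxy
    have hxC : x ∉ C := fun hxC =>
      hne <| (hin x hxC).trans (hin y (hmem.2 ⟨hy, (hmem.1 hxC).2.trans hxy⟩)).symm
    have hyC : y ∉ C := fun hyC => hxC (hmem.2 ⟨hx, (hmem.1 hyC).2.trans hxy.symm⟩)
    rw [hout x hxC, hout y hyC] at hne
    exact ⟨hx, hy, hxy, hne⟩
  · simp [discordantPairs, hu, hv, htype, hne]
  · simp [discordantPairs, hin u (hmem.2 ⟨hu, .refl u⟩), hin v (hmem.2 ⟨hv, htype⟩)]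

theorem exists_happyEdgeCount_le_forall_sameType [Fintype V] (S : Finset V) (c : V → Fin k) :
    ∃ c' : V → Fin k, (∀ x ∈ S, c' x = c x) ∧ happyEdgeCount G c ≤ happyEdgeCount G c' ∧
      ∀ u v, u ∉ S → v ∉ S → G.SameType u v → c' u = c' v := by
  induction h : #(G.discordantPairs S c) using Nat.strong_induction_on generalizing c with
  | _ n ih =>
  rcases (G.discordantPairs S c).eq_empty_or_nonempty with hempty | hne
  · refine ⟨c, fun _ _ => rfl, le_rfl, fun u v hu hv huv => ?_⟩
    by_contra hne
    have : (u, v) ∈ G.discordantPairs S c := by simp [discordantPairs, hu, hv, huv, hne]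
    simp [hempty] at this
  · obtain ⟨c₁, hS₁, hle₁, hss⟩ := G.exists_discordantPairs_ssubset hne
    obtain ⟨c', hS', hle', hc'⟩ := ih _ (h ▸ card_lt_card hss) c₁ rfl
    exact ⟨c', fun x hx => (hS' x hx).trans (hS₁ x hx), hle₁.trans hle', hc'⟩

end SimpleGraph

theorem stmt12_general {V : Type*} [Fintype V] (k : ℕ)
    (G : SimpleGraph V) (S : Finset V) (c : V → Fin k) :
    ∃ c' : V → Fin k, (∀ v ∈ S, c' v = c v) ∧
      (∀ c'' : V → Fin k, (∀ v ∈ S, c'' v = c v) →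
        happyEdgeCount G c'' ≤ happyEdgeCount G c') ∧
      ∀ u v : V, u ∉ S → v ∉ S →
        G.neighborSet u \ {v} = G.neighborSet v \ {u} → c' u = c' v := by
  obtain ⟨c₀, hc₀, hmax⟩ := exists_max_image {f : V → Fin k | ∀ v ∈ S, f v = c v}
    (happyEdgeCount G) ⟨c, by simp⟩
  rw [mem_filter] at hc₀
  obtain ⟨c', hS, hle, hsame⟩ := G.exists_happyEdgeCount_le_forall_sameType S c₀
  refine ⟨c', fun v hv => (hS v hv).trans (hc₀.2 v hv), fun c'' h'' => ?_, hsame⟩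
  exact (hmax c'' (by simpa using h'')).trans hle

/-- For any partial coloring `c : S → [k]` of a graph `G` there is an
extension `c'` of `c` maximizing the number of happy edges over all extensions such that,
moreover, any two uncolored vertices of the same type (`N(u) ∖ {v} = N(v) ∖ {u}`) receive the
same color under `c'`. -/
theorem stmt12 {V : Type*} [Fintype V] (k : ℕ) (hk : 1 ≤ k)
    (G : SimpleGraph V) (S : Finset V) (c : V → Fin k) :
    ∃ c' : V → Fin k, (∀ v ∈ S, c' v = c v) ∧
      (∀ c'' : V → Fin k, (∀ v ∈ S, c'' v = c v) →
        happyEdgeCount G c'' ≤ happyEdgeCount G c') ∧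
      ∀ u v : V, u ∉ S → v ∉ S →
        G.neighborSet u \ {v} = G.neighborSet v \ {u} → c' u = c' v :=
  stmt12_general k G S c
end

section
/- Let k ≥ 1, let G = (V,E) be a finite simple graph, and let c : S → [k] be a partial coloring. Say two vertices u and v have the same type if N(u) ∖ {v} = N(v) ∖ {u}, where N(x) denotes the open neighborhood of x. Then there exists an extension c' of c to a full k-coloring of G that maximizes the number of happy vertices over all extensions of c and that, in addition, satisfies c'(u) = c'(v) for all u, v ∈ V ∖ S having the same type. -/
open Finset
open scoped Classical

private lemma adj_of_st {V : Type*} {G : SimpleGraph V} {u v w : V}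
    (h : G.neighborSet u \ {v} = G.neighborSet v \ {u})
    (hvw : G.Adj v w) (hwu : w ≠ u) : G.Adj u w := by
  have hw : w ∈ G.neighborSet v \ {u} := ⟨hvw, hwu⟩
  rw [← h] at hw
  exact hw.1

private lemma st_chase {V : Type*} {G : SimpleGraph V} {u v w x : V}
    (h1 : G.neighborSet u \ {v} = G.neighborSet v \ {u})
    (h2 : G.neighborSet v \ {w} = G.neighborSet w \ {v})
    (hux : G.Adj u x) (hxw : x ≠ w) : G.Adj w x := by
  by_cases hxv : x = v
  · subst hxv
    by_cases huw : u = w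
    · subst huw; exact hux
    · have h3 : G.Adj w u := adj_of_st h2.symm hux.symm huw
      exact (adj_of_st h1.symm h3.symm (Ne.symm hxw)).symm
  · have hx1 : G.Adj v x := adj_of_st h1.symm hux hxv
    exact adj_of_st h2.symm hx1 hxw

private lemma st_trans {V : Type*} {G : SimpleGraph V} {u v w : V}
    (h1 : G.neighborSet u \ {v} = G.neighborSet v \ {u})
    (h2 : G.neighborSet v \ {w} = G.neighborSet w \ {v}) :
    G.neighborSet u \ {w} = G.neighborSet w \ {u} := by
  ext x
  simp only [Set.mem_diff, SimpleGraph.mem_neighborSet, Set.mem_singleton_iff]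
  constructor
  · rintro ⟨hux, hxw⟩
    exact ⟨st_chase h1 h2 hux hxw, hux.ne'⟩
  · rintro ⟨hwx, hxu⟩
    exact ⟨st_chase h2.symm h1.symm hwx hxu, hwx.ne'⟩

/-- For any partial coloring `c : S → [k]` of a graph `G` there is an
extension `c'` of `c` maximizing the number of happy vertices over all extensions such that,
moreover, any two uncolored vertices of the same type (`N(u) ∖ {v} = N(v) ∖ {u}`) receive the
same color under `c'`. -/
theorem stmt13 {V : Type*} [Fintype V] (k : ℕ) (hk : 1 ≤ k)
    (G : SimpleGraph V) (S : Finset V) (c : V → Fin k) :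
    ∃ c' : V → Fin k, (∀ v ∈ S, c' v = c v) ∧
      (∀ c'' : V → Fin k, (∀ v ∈ S, c'' v = c v) →
        happyVertexCount G c'' ≤ happyVertexCount G c') ∧
      ∀ u v : V, u ∉ S → v ∉ S →
        G.neighborSet u \ {v} = G.neighborSet v \ {u} → c' u = c' v := by
  classical
  set E : Finset (V → Fin k) := Finset.univ.filter (fun c' => ∀ v ∈ S, c' v = c v) with hE
  have hcE : c ∈ E := by simp [hE]
  obtain ⟨cm, hcmE, hcmMax⟩ := Finset.exists_max_image E (happyVertexCount G) ⟨c, hcE⟩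
  set O : Finset (V → Fin k) :=
    E.filter (fun c' => ∀ a ∈ E, happyVertexCount G a ≤ happyVertexCount G c') with hO
  have hcmO : cm ∈ O := by
    rw [hO, Finset.mem_filter]; exact ⟨hcmE, hcmMax⟩
  set Φ : (V → Fin k) → ℕ := fun c' =>
    (Finset.univ.filter (fun p : V × V => p.1 ∉ S ∧ p.2 ∉ S ∧
      G.neighborSet p.1 \ {p.2} = G.neighborSet p.2 \ {p.1} ∧ c' p.1 ≠ c' p.2)).card with hΦ
  obtain ⟨c', hc'O, hc'Min⟩ := Finset.exists_min_image O Φ ⟨cm, hcmO⟩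
  rw [hO, Finset.mem_filter] at hc'O
  obtain ⟨hc'E, hc'opt⟩ := hc'O
  have hc'ext : ∀ v ∈ S, c' v = c v := by
    rw [hE, Finset.mem_filter] at hc'E; exact hc'E.2
  refine ⟨c', hc'ext, ?_, ?_⟩
  · intro c'' h''
    exact hc'opt c'' (by rw [hE, Finset.mem_filter]; exact ⟨Finset.mem_univ _, h''⟩)
  · by_contra hbad
    push_neg at hbad
    obtain ⟨u₀, v₀, hu₀S, hv₀S, hst₀, hne₀⟩ := hbad
    set C : Set V := {x | x ∉ S ∧ G.neighborSet x \ {v₀} = G.neighborSet v₀ \ {x}} with hC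
    have hv₀C : v₀ ∈ C := ⟨hv₀S, rfl⟩
    have hu₀C : u₀ ∈ C := ⟨hu₀S, hst₀⟩
    have hCst : ∀ a ∈ C, ∀ b ∈ C,
        G.neighborSet a \ {b} = G.neighborSet b \ {a} :=
      fun a ha b hb => st_trans ha.2 hb.2.symm
    have hF : ∀ a ∈ C, ∀ b ∈ C, ∀ w, G.Adj b w → w ∉ C → G.Adj a w := by
      intro a ha b hb w hbw hwC
      by_cases haw : w = a
      · exact absurd (haw ▸ ha) hwC
      · exact adj_of_st (hCst a ha b hb) hbw haw
    obtain ⟨t, ht⟩ : ∃ t : Fin k,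
        (∃ s : Fin k, ∀ w, w ∉ C → G.Adj v₀ w → c' w = s) →
        ∀ w, w ∉ C → G.Adj v₀ w → c' w = t := by
      by_cases hQ : ∃ s, ∀ w, w ∉ C → G.Adj v₀ w → c' w = s
      · obtain ⟨s, hs⟩ := hQ; exact ⟨s, fun _ => hs⟩
      · exact ⟨c' v₀, fun h => absurd h hQ⟩
    set c'' : V → Fin k := fun x => if x ∈ C then t else c' x with hc''
    have hc''ext : ∀ v ∈ S, c'' v = c v := by
      intro v hv
      have hvC : v ∉ C := fun h => h.1 hv
      simp [hc'', hvC, hc'ext v hv]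
    have hsub : Finset.univ.filter (fun v => ∀ u, G.Adj v u → c' u = c' v) ⊆
        Finset.univ.filter (fun v => ∀ u, G.Adj v u → c'' u = c'' v) := by
      intro x hx
      simp only [Finset.mem_filter, Finset.mem_univ, true_and] at hx ⊢
      by_cases hxC : x ∈ C
      · have hQ : ∃ s, ∀ w, w ∉ C → G.Adj v₀ w → c' w = s :=
          ⟨c' x, fun w hwC hvw => hx w (hF x hxC v₀ hv₀C w hvw hwC)⟩
        have htQ := ht hQ
        intro y hxy
        by_cases hyC : y ∈ C
        · simp [hc'', hyC, hxC]
        · have hyt : c' y = t := htQ y hyC (hF v₀ hv₀C x hxC y hxy hyC)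
          simp [hc'', hyC, hxC, hyt]
      · by_cases hN : ∃ y ∈ C, G.Adj x y
        · obtain ⟨y, hyC, hxy⟩ := hN
          exfalso
          have h1 : c' u₀ = c' x := hx u₀ (hF u₀ hu₀C y hyC x hxy.symm hxC).symm
          have h2 : c' v₀ = c' x := hx v₀ (hF v₀ hv₀C y hyC x hxy.symm hxC).symm
          exact hne₀ (h1.trans h2.symm)
        · push_neg at hN
          intro y hxy
          have hy : y ∉ C := fun h => hN y h hxy
          simpa [hc'', hxC, hy] using hx y hxy
    have hhap : happyVertexCount G c' ≤ happyVertexCount G c'' :=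
      Finset.card_le_card hsub
    have hss : (Finset.univ.filter (fun p : V × V => p.1 ∉ S ∧ p.2 ∉ S ∧
          G.neighborSet p.1 \ {p.2} = G.neighborSet p.2 \ {p.1} ∧ c'' p.1 ≠ c'' p.2)) ⊆
        (Finset.univ.filter (fun p : V × V => p.1 ∉ S ∧ p.2 ∉ S ∧
          G.neighborSet p.1 \ {p.2} = G.neighborSet p.2 \ {p.1} ∧ c' p.1 ≠ c' p.2)) := by
      intro p hp
      simp only [Finset.mem_filter, Finset.mem_univ, true_and] at hp ⊢
      obtain ⟨h1, h2, h3, h4⟩ := hp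
      refine ⟨h1, h2, h3, ?_⟩
      by_cases hp1 : p.1 ∈ C
      · by_cases hp2 : p.2 ∈ C
        · exact absurd (by simp [hc'', hp1, hp2]) h4
        · exact absurd ⟨h2, st_trans h3.symm hp1.2⟩ hp2
      · by_cases hp2 : p.2 ∈ C
        · exact absurd ⟨h1, st_trans h3 hp2.2⟩ hp1
        · simpa [hc'', hp1, hp2] using h4
    have hΦlt : Φ c'' < Φ c' := by
      rw [hΦ]
      apply Finset.card_lt_card
      rw [Finset.ssubset_iff_of_subset hss]
      refine ⟨(u₀, v₀), ?_, ?_⟩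
      · simp only [Finset.mem_filter, Finset.mem_univ, true_and]
        exact ⟨hu₀S, hv₀S, hst₀, hne₀⟩
      · simp only [Finset.mem_filter, Finset.mem_univ, true_and, not_and, not_not]
        intro _ _ _
        simp [hc'', hu₀C, hv₀C]
    have hc''O : c'' ∈ O := by
      rw [hO, Finset.mem_filter]
      refine ⟨by rw [hE, Finset.mem_filter]; exact ⟨Finset.mem_univ _, hc''ext⟩, fun a ha => le_trans (hc'opt a ha) hhap⟩
    exact absurd (hc'Min c'' hc''O) (not_le.mpr hΦlt)
end

section
/- Let k ≥ 1, let G = (V,E) be a finite simple graph, let c' : V → [k] be a full coloring, and let P ⊆ V be a set of vertices that pairwise have the same type, i.e., N(u) ∖ {v} = N(v) ∖ {u} for all u, v ∈ P. Let i ≠ j be two colors, let Q_1 = {v ∈ P : c'(v) = i} and Q_2 = {v ∈ P : c'(v) = j} be nonempty, let X_1 = {u ∈ N(P) ∖ P : c'(u) = i} and X_2 = {u ∈ N(P) ∖ P : c'(u) = j}, and let c'' be the full coloring obtained from c' by recoloring every vertex of Q_1 with color j. Then the number of happy edges under c'' minus the number of happy edges under c' equals e(Q_1, Q_2) + |Q_1|·(|X_2|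 − |X_1|) (as integers), where e(Q_1, Q_2) is the number of edges of G with one endpoint in Q_1 and the other in Q_2. -/
open Finset
open scoped Classical

lemma happy_iff' {V : Type*} {k : ℕ} (c : V → Fin k) (a b : V) :
    (∀ x ∈ (s(a,b) : Sym2 V), ∀ y ∈ s(a,b), c x = c y) ↔ c a = c b := by
  constructor
  · intro h; exact h a (Sym2.mem_mk_left a b) b (Sym2.mem_mk_right a b)
  · intro h x hx y hy
    rcases Sym2.mem_iff.mp hx with rfl|rfl <;> rcases Sym2.mem_iff.mp hy with rfl|rfl <;>
      first | rfl | exact h | exact h.symm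

lemma edge_card_eq' {V : Type*} [Fintype V] (G : SimpleGraph V) (A B : Finset V)
    (hAB : Disjoint A B) (hadj : ∀ a ∈ A, ∀ b ∈ B, G.Adj a b) :
    (G.edgeFinset.filter (fun e => ∃ a ∈ A, ∃ b ∈ B, e = s(a,b))).card = A.card * B.card := by
  rw [← Finset.card_product]
  refine (Finset.card_bij (fun (p : V × V) (_ : p ∈ A ×ˢ B) => s(p.1, p.2)) ?_ ?_ ?_).symm
  · rintro ⟨a, b⟩ hp
    rw [Finset.mem_product] at hp
    refine Finset.mem_filter.mpr ⟨?_, a, hp.1, b, hp.2, rfl⟩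
    exact SimpleGraph.mem_edgeFinset.mpr (hadj a hp.1 b hp.2)
  · rintro ⟨a, b⟩ hp ⟨a', b'⟩ hp' h
    rw [Finset.mem_product] at hp hp'
    rcases Sym2.eq_iff.mp h with ⟨rfl, rfl⟩ | ⟨rfl, rfl⟩
    · rfl
    · exact absurd hp.1 (Finset.disjoint_right.mp hAB hp'.2)
  · intro e he
    obtain ⟨-, a, ha, b, hb, rfl⟩ := Finset.mem_filter.mp he
    exact ⟨(a, b), Finset.mem_product.mpr ⟨ha, hb⟩, rfl⟩

/-- Let `c'` be a full `k`-coloring of `G`, let `P` be a set of vertices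
pairwise of the same type (`N(u) ∖ {v} = N(v) ∖ {u}`), let `i ≠ j` be colors with
`Q_1 = {v ∈ P : c'(v) = i}` and `Q_2 = {v ∈ P : c'(v) = j}` nonempty, let
`X_1 = {u ∈ N(P) ∖ P : c'(u) = i}` and `X_2 = {u ∈ N(P) ∖ P : c'(u) = j}`, and let `c''` be
obtained from `c'` by recoloring every vertex of `Q_1` with color `j`.  Then the change in the
number of happy edges is exactly `e(Q_1, Q_2) + |Q_1|·(|X_2| − |X_1|)` (as integers), where
`e(Q_1, Q_2)` is the number of edges of `G` between `Q_1` and `Q_2`. -/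
theorem stmt14 {V : Type*} [Fintype V] (k : ℕ) (hk : 1 ≤ k)
    (G : SimpleGraph V) (c' : V → Fin k) (P : Finset V)
    (hP : ∀ u ∈ P, ∀ v ∈ P, G.neighborSet u \ {v} = G.neighborSet v \ {u})
    (i j : Fin k) (hij : i ≠ j)
    (hQ1 : (P.filter fun x => c' x = i).Nonempty)
    (hQ2 : (P.filter fun x => c' x = j).Nonempty) :
    (happyEdgeCount G (fun v => if v ∈ P.filter (fun x => c' x = i) then j else c' v) : ℤ) -
        (happyEdgeCount G c' : ℤ) =
      ((G.edgeFinset.filter (fun e => ∃ a ∈ P.filter (fun x => c' x = i),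
          ∃ b ∈ P.filter (fun x => c' x = j), e = s(a, b))).card : ℤ) +
        ((P.filter fun x => c' x = i).card : ℤ) *
          (((Finset.univ.filter
              (fun u => (∃ p ∈ P, G.Adj p u) ∧ u ∉ P ∧ c' u = j)).card : ℤ) -
            ((Finset.univ.filter
              (fun u => (∃ p ∈ P, G.Adj p u) ∧ u ∉ P ∧ c' u = i)).card : ℤ)) := by
  set Q1 := P.filter (fun x => c' x = i) with hQ1def
  set Q2 := P.filter (fun x => c' x = j) with hQ2def
  set X1 := Finset.univ.filter (fun u => (∃ p ∈ P, G.Adj p u) ∧ u ∉ P ∧ c' u = i) with hX1def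
  set X2 := Finset.univ.filter (fun u => (∃ p ∈ P, G.Adj p u) ∧ u ∉ P ∧ c' u = j) with hX2def
  set c'' : V → Fin k := fun v => if v ∈ Q1 then j else c' v with hc''def
  set gain : Sym2 V → Prop :=
    fun e => (∃ a ∈ Q1, ∃ b ∈ Q2, e = s(a,b)) ∨ (∃ a ∈ Q1, ∃ b ∈ X2, e = s(a,b)) with hgaindef
  set lose : Sym2 V → Prop := fun e => ∃ a ∈ Q1, ∃ b ∈ X1, e = s(a,b) with hlosedef
  have hQ1P : Q1 ⊆ P := Finset.filter_subset _ _
  -- any external vertex adjacent to some vertex of P is adjacent to all of P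
  have hext : ∀ u, u ∉ P → ∀ p ∈ P, G.Adj p u → ∀ q ∈ P, G.Adj q u := by
    intro u hu p hp hpu q hq
    by_cases hqp : q = p
    · subst hqp; exact hpu
    · have hne : u ≠ q := fun h => hu (h ▸ hq)
      have h1 : u ∈ G.neighborSet p \ {q} := ⟨hpu, by simpa using hne⟩
      rw [hP p hp q hq] at h1
      exact h1.1
  -- the pointwise key lemma, mixed case
  have hmixed : ∀ a b, G.Adj a b → a ∈ Q1 → b ∉ Q1 →
      ((if c'' a = c'' b then (1:ℤ) else 0) - (if c' a = c' b then 1 else 0)) =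
      ((if gain s(a,b) then (1:ℤ) else 0) - (if lose s(a,b) then 1 else 0)) := by
    intro a b hab ha hb
    obtain ⟨haP, hai⟩ := Finset.mem_filter.mp ha
    have hca : c'' a = j := by simp [hc''def, ha]
    have hcb : c'' b = c' b := by simp [hc''def, hb]
    by_cases hbj : c' b = j
    · have hgain : gain s(a,b) := by
        by_cases hbP : b ∈ P
        · exact Or.inl ⟨a, ha, b, Finset.mem_filter.mpr ⟨hbP, hbj⟩, rfl⟩
        · exact Or.inr ⟨a, ha, b,
            Finset.mem_filter.mpr ⟨Finset.mem_univ b, ⟨a, haP, hab⟩, hbP, hbj⟩, rfl⟩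
      have hlose : ¬ lose s(a,b) := by
        rintro ⟨x, hx, y, hy, he⟩
        obtain ⟨-, -, hyP, hyi⟩ := Finset.mem_filter.mp hy
        rcases Sym2.eq_iff.mp he with ⟨rfl, rfl⟩ | ⟨rfl, rfl⟩
        · exact hij (hyi.symm.trans hbj)
        · exact hyP haP
      rw [if_pos (by rw [hca, hcb, hbj]),
        if_neg (fun h => hij (hai.symm.trans (h.trans hbj))), if_pos hgain, if_neg hlose]
    · by_cases hbi : c' b = i
      · have hbP : b ∉ P := fun hbP => hb (Finset.mem_filter.mpr ⟨hbP, hbi⟩)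
        have hlose : lose s(a,b) :=
          ⟨a, ha, b, Finset.mem_filter.mpr ⟨Finset.mem_univ b, ⟨a, haP, hab⟩, hbP, hbi⟩, rfl⟩
        have hgain : ¬ gain s(a,b) := by
          rintro (⟨x, hx, y, hy, he⟩ | ⟨x, hx, y, hy, he⟩)
          · obtain ⟨hyP, hyj⟩ := Finset.mem_filter.mp hy
            rcases Sym2.eq_iff.mp he with ⟨rfl, rfl⟩ | ⟨rfl, rfl⟩
            · exact hij (hbi.symm.trans hyj)
            · exact hij (hai.symm.trans hyj)
          · obtain ⟨-, -, hyP, hyj⟩ := Finset.mem_filter.mp hy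
            rcases Sym2.eq_iff.mp he with ⟨rfl, rfl⟩ | ⟨rfl, rfl⟩
            · exact hij (hbi.symm.trans hyj)
            · exact hyP haP
        rw [if_neg (fun h => hij (((hca.symm.trans h).trans (hcb.trans hbi)).symm)),
          if_pos (hai.trans hbi.symm), if_neg hgain, if_pos hlose]
      · have hgain : ¬ gain s(a,b) := by
          rintro (⟨x, hx, y, hy, he⟩ | ⟨x, hx, y, hy, he⟩)
          · obtain ⟨hyP, hyj⟩ := Finset.mem_filter.mp hy
            rcases Sym2.eq_iff.mp he with ⟨rfl, rfl⟩ | ⟨rfl, rfl⟩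
            · exact hbj hyj
            · exact hij (hai.symm.trans hyj)
          · obtain ⟨-, -, hyP, hyj⟩ := Finset.mem_filter.mp hy
            rcases Sym2.eq_iff.mp he with ⟨rfl, rfl⟩ | ⟨rfl, rfl⟩
            · exact hbj hyj
            · exact hyP haP
        have hlose : ¬ lose s(a,b) := by
          rintro ⟨x, hx, y, hy, he⟩
          obtain ⟨-, -, hyP, hyi⟩ := Finset.mem_filter.mp hy
          rcases Sym2.eq_iff.mp he with ⟨rfl, rfl⟩ | ⟨rfl, rfl⟩
          · exact hbi hyi
          · exact hyP haP
        rw [if_neg (fun h => hbj ((hca.symm.trans h).trans hcb).symm),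
          if_neg (fun h => hbi (hai ▸ h.symm)), if_neg hgain, if_neg hlose]
  have key : ∀ a b, G.Adj a b →
      ((if c'' a = c'' b then (1:ℤ) else 0) - (if c' a = c' b then 1 else 0)) =
      ((if gain s(a,b) then (1:ℤ) else 0) - (if lose s(a,b) then 1 else 0)) := by
    intro a b hab
    by_cases ha : a ∈ Q1 <;> by_cases hb : b ∈ Q1
    · obtain ⟨haP, hai⟩ := Finset.mem_filter.mp ha
      obtain ⟨hbP, hbi⟩ := Finset.mem_filter.mp hb
      have hgain : ¬ gain s(a,b) := by
        rintro (⟨x, hx, y, hy, he⟩ | ⟨x, hx, y, hy, he⟩)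
        · obtain ⟨hyP, hyj⟩ := Finset.mem_filter.mp hy
          rcases Sym2.eq_iff.mp he with ⟨rfl, rfl⟩ | ⟨rfl, rfl⟩
          · exact hij (hbi.symm.trans hyj)
          · exact hij (hai.symm.trans hyj)
        · obtain ⟨-, -, hyP, hyj⟩ := Finset.mem_filter.mp hy
          rcases Sym2.eq_iff.mp he with ⟨rfl, rfl⟩ | ⟨rfl, rfl⟩
          · exact hyP hbP
          · exact hyP haP
      have hlose : ¬ lose s(a,b) := by
        rintro ⟨x, hx, y, hy, he⟩
        obtain ⟨-, -, hyP, hyi⟩ := Finset.mem_filter.mp hy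
        rcases Sym2.eq_iff.mp he with ⟨rfl, rfl⟩ | ⟨rfl, rfl⟩
        · exact hyP hbP
        · exact hyP haP
      rw [if_pos (show c'' a = c'' b by simp [hc''def, ha, hb]),
        if_pos (hai.trans hbi.symm), if_neg hgain, if_neg hlose]
      norm_num
    · exact hmixed a b hab ha hb
    · have h := hmixed b a hab.symm hb ha
      rw [show (s(a,b) : Sym2 V) = s(b,a) from Sym2.eq_swap,
        show (if c'' a = c'' b then (1:ℤ) else 0) = (if c'' b = c'' a then 1 else 0) from
          if_congr eq_comm rfl rfl,
        show (if c' a = c' b then (1:ℤ) else 0) = (if c' b = c' a then 1 else 0) from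
          if_congr eq_comm rfl rfl]
      exact h
    · have hca : c'' a = c' a := by simp [hc''def, ha]
      have hcb : c'' b = c' b := by simp [hc''def, hb]
      have hgain : ¬ gain s(a,b) := by
        rintro (⟨x, hx, y, hy, he⟩ | ⟨x, hx, y, hy, he⟩) <;>
          rcases Sym2.eq_iff.mp he with ⟨rfl, rfl⟩ | ⟨rfl, rfl⟩ <;>
            first | exact ha hx | exact hb hx
      have hlose : ¬ lose s(a,b) := by
        rintro ⟨x, hx, y, hy, he⟩
        rcases Sym2.eq_iff.mp he with ⟨rfl, rfl⟩ | ⟨rfl, rfl⟩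
        · exact ha hx
        · exact hb hx
      rw [hca, hcb, if_neg hgain, if_neg hlose, sub_self, sub_self]
  -- rewrite the happy edge counts as sums
  have hcast : ∀ (c : V → Fin k), (happyEdgeCount G c : ℤ) =
      ∑ e ∈ G.edgeFinset, if (∀ x ∈ e, ∀ y ∈ e, c x = c y) then (1:ℤ) else 0 := by
    intro c
    rw [happyEdgeCount, Finset.sum_boole]
  rw [hcast, hcast, ← Finset.sum_sub_distrib]
  have hre : ∀ e ∈ G.edgeFinset,
      ((if (∀ x ∈ e, ∀ y ∈ e, c'' x = c'' y) then (1:ℤ) else 0) -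
       (if (∀ x ∈ e, ∀ y ∈ e, c' x = c' y) then (1:ℤ) else 0)) =
      ((if gain e then (1:ℤ) else 0) - (if lose e then 1 else 0)) := by
    intro e
    induction e using Sym2.ind with
    | _ a b =>
      intro he
      have hab : G.Adj a b := SimpleGraph.mem_edgeSet G |>.mp (SimpleGraph.mem_edgeFinset.mp he)
      rw [if_congr (happy_iff' c'' a b) rfl rfl, if_congr (happy_iff' c' a b) rfl rfl]
      exact key a b hab
  rw [Finset.sum_congr rfl hre, Finset.sum_sub_distrib, Finset.sum_boole, Finset.sum_boole]
  -- cardinality computations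
  have hd2 : (G.edgeFinset.filter (fun e => ∃ a ∈ Q1, ∃ b ∈ X2, e = s(a,b))).card
      = Q1.card * X2.card := by
    apply edge_card_eq'
    · rw [Finset.disjoint_left]
      intro a haQ haX
      exact ((Finset.mem_filter.mp haX).2).2.1 (hQ1P haQ)
    · intro a haQ b hbX
      obtain ⟨-, ⟨p, hp, hpb⟩, hbP, -⟩ := Finset.mem_filter.mp hbX
      exact hext b hbP p hp hpb a (hQ1P haQ)
  have hd1 : (G.edgeFinset.filter (fun e => ∃ a ∈ Q1, ∃ b ∈ X1, e = s(a,b))).card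
      = Q1.card * X1.card := by
    apply edge_card_eq'
    · rw [Finset.disjoint_left]
      intro a haQ haX
      exact ((Finset.mem_filter.mp haX).2).2.1 (hQ1P haQ)
    · intro a haQ b hbX
      obtain ⟨-, ⟨p, hp, hpb⟩, hbP, -⟩ := Finset.mem_filter.mp hbX
      exact hext b hbP p hp hpb a (hQ1P haQ)
  have hunion : (G.edgeFinset.filter gain).card =
      (G.edgeFinset.filter (fun e => ∃ a ∈ Q1, ∃ b ∈ Q2, e = s(a,b))).card +
      Q1.card * X2.card := by
    have hsplit : G.edgeFinset.filter gain =
        G.edgeFinset.filter (fun e => ∃ a ∈ Q1, ∃ b ∈ Q2, e = s(a,b)) ∪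
        G.edgeFinset.filter (fun e => ∃ a ∈ Q1, ∃ b ∈ X2, e = s(a,b)) := by
      ext e
      simp only [hgaindef, Finset.mem_filter, Finset.mem_union, and_or_left]
    rw [hsplit, Finset.card_union_of_disjoint, hd2]
    rw [Finset.disjoint_left]
    intro e he1 he2
    obtain ⟨-, x, hx, y, hy, rfl⟩ := Finset.mem_filter.mp he1
    obtain ⟨-, x', hx', y', hy', he⟩ := Finset.mem_filter.mp he2
    obtain ⟨-, -, hy'P, -⟩ := Finset.mem_filter.mp hy'
    rcases Sym2.eq_iff.mp he with ⟨rfl, rfl⟩ | ⟨rfl, rfl⟩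
    · exact hy'P ((Finset.mem_filter.mp hy).1)
    · exact hy'P (hQ1P hx)
  have hlosecard : (G.edgeFinset.filter lose).card = Q1.card * X1.card := by
    have heq : G.edgeFinset.filter lose =
        G.edgeFinset.filter (fun e => ∃ a ∈ Q1, ∃ b ∈ X1, e = s(a,b)) := by
      ext e
      simp only [Finset.mem_filter, hlosedef]
    rw [heq, hd1]
  rw [hunion, hlosecard]
  push_cast
  ring
end
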